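/- arXiv:2204.10311 — 8 statements merged into one kernel-verified Lean document; each statement's English description precedes it below -/
import Mathlib

section
/- Let p ≥ 5 be a prime and q = p^r with r ≥ 1. Then for every integer a with 0 ≤ a ≤ q−2 and a ≠ (q−1)/2, and every integer i with 0 ≤ i ≤ r−1, one has −2·⌊2ap^i/(q−1)⌋ − ⌊−6ap^i/(q−1)⌋ + ⌊ap^i/(q−1)⌋ + ⌊−3ap^i/(q−1)⌋ = −⌊⟨p^i/6⟩ − ap^i/(q−1)⌋ − ⌊⟨5p^i/6⟩ − ap^i/(q−1)⌋ − ⌊⟨p^i/2⟩ + ap^i/(q−1)⌋ − ⌊ap^i/(q−1)⌋. -/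
lemma key (t : ℚ) (h0 : 0 ≤ t) (h1 : t < 1) (hh : t ≠ 1/2) :
    -2*⌊2*t⌋ - ⌊-6*t⌋ + ⌊t⌋ + ⌊-3*t⌋
      = -⌊1/6 - t⌋ - ⌊5/6 - t⌋ - ⌊1/2 + t⌋ - ⌊t⌋ := by
  have H : ∀ (y : ℚ) (z : ℤ), (z:ℚ) ≤ y → y < (z:ℚ)+1 → ⌊y⌋ = z := fun y z a b =>
    Int.floor_eq_iff.mpr ⟨a, by push_cast at b ⊢; linarith⟩
  rcases h0.eq_or_lt with h|h
  ·rw [H (2*t) (0) (by push_cast; linarith) (by push_cast; linarith), H (-6*t) (0) (by push_cast; linarith) (by push_cast; linarith), H (t) (0) (by push_cast; linarith) (by push_cast; linarith), H (-3*t) (0) (by push_cast; linarith) (by push_cast; linarith), H (1/6 - t) (0) (by push_cast; linarith) (by push_cast; linarith), H (5/6 - t) (0) (by push_cast; linarith) (by push_cast; linarith), H (1/2 + t) (0) (by push_cast; linarith) (by push_cast; linarith)]; decide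
  · rcases lt_trichotomy t (1/6) with h2|h2|h2
    ·rw [H (2*t) (0) (by push_cast; linarith) (by push_cast; linarith), H (-6*t) (-1) (by push_cast; linarith) (by push_cast; linarith), H (t) (0) (by push_cast; linarith) (by push_cast; linarith), H (-3*t) (-1) (by push_cast; linarith) (by push_cast; linarith), H (1/6 - t) (0) (by push_cast; linarith) (by push_cast; linarith), H (5/6 - t) (0) (by push_cast; linarith) (by push_cast; linarith), H (1/2 + t) (0) (by push_cast; linarith) (by push_cast; linarith)]; decide
    ·rw [H (2*t) (0) (by push_cast; linarith) (by push_cast; linarith), H (-6*t) (-1) (by push_cast; linarith) (by push_cast; linarith), H (t) (0) (by push_cast; linarith) (by push_cast; linarith), H (-3*t) (-1) (by push_cast; linarith) (by push_cast; linarith), H (1/6 - t) (0) (by push_cast; linarith) (by push_cast; linarith), H (5/6 - t) (0) (by push_cast; linarith) (by push_cast; linarith), H (1/2 + t) (0) (by push_cast; linarith) (by push_cast; linarith)]; decide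
    · rcases lt_trichotomy t (1/3) with h3|h3|h3
      ·rw [H (2*t) (0) (by push_cast; linarith) (by push_cast; linarith), H (-6*t) (-2) (by push_cast; linarith) (by push_cast; linarith), H (t) (0) (by push_cast; linarith) (by push_cast; linarith), H (-3*t) (-1) (by push_cast; linarith) (by push_cast; linarith), H (1/6 - t) (-1) (by push_cast; linarith) (by push_cast; linarith), H (5/6 - t) (0) (by push_cast; linarith) (by push_cast; linarith), H (1/2 + t) (0) (by push_cast; linarith) (by push_cast; linarith)]; decide
      ·rw [H (2*t) (0) (by push_cast; linarith) (by push_cast; linarith), H (-6*t) (-2) (by push_cast; linarith) (by push_cast; linarith), H (t) (0) (by push_cast; linarith) (by push_cast; linarith), H (-3*t) (-1) (by push_cast; linarith) (by push_cast; linarith), H (1/6 - t) (-1) (by push_cast; linarith) (by push_cast; linarith), H (5/6 - t) (0) (by push_cast; linarith) (by push_cast; linarith), H (1/2 + t) (0) (by push_cast; linarith) (by push_cast; linarith)]; decide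
      · rcases lt_or_ge t (1/2) with h4|h4
        ·rw [H (2*t) (0) (by push_cast; linarith) (by push_cast; linarith), H (-6*t) (-3) (by push_cast; linarith) (by push_cast; linarith), H (t) (0) (by push_cast; linarith) (by push_cast; linarith), H (-3*t) (-2) (by push_cast; linarith) (by push_cast; linarith), H (1/6 - t) (-1) (by push_cast; linarith) (by push_cast; linarith), H (5/6 - t) (0) (by push_cast; linarith) (by push_cast; linarith), H (1/2 + t) (0) (by push_cast; linarith) (by push_cast; linarith)]; decide
        · have h5 : 1/2 < t := lt_of_le_of_ne h4 (Ne.symm hh)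
          rcases lt_trichotomy t (2/3) with h6|h6|h6
          ·rw [H (2*t) (1) (by push_cast; linarith) (by push_cast; linarith), H (-6*t) (-4) (by push_cast; linarith) (by push_cast; linarith), H (t) (0) (by push_cast; linarith) (by push_cast; linarith), H (-3*t) (-2) (by push_cast; linarith) (by push_cast; linarith), H (1/6 - t) (-1) (by push_cast; linarith) (by push_cast; linarith), H (5/6 - t) (0) (by push_cast; linarith) (by push_cast; linarith), H (1/2 + t) (1) (by push_cast; linarith) (by push_cast; linarith)]; decide
          ·rw [H (2*t) (1) (by push_cast; linarith) (by push_cast; linarith), H (-6*t) (-4) (by push_cast; linarith) (by push_cast; linarith), H (t) (0) (by push_cast; linarith) (by push_cast; linarith), H (-3*t) (-2) (by push_cast; linarith) (by push_cast; linarith), H (1/6 - t) (-1) (by push_cast; linarith) (by push_cast; linarith), H (5/6 - t) (0) (by push_cast; linarith) (by push_cast; linarith), H (1/2 + t) (1) (by push_cast; linarith) (by push_cast; linarith)]; decide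
          · rcases lt_trichotomy t (5/6) with h7|h7|h7
            ·rw [H (2*t) (1) (by push_cast; linarith) (by push_cast; linarith), H (-6*t) (-5) (by push_cast; linarith) (by push_cast; linarith), H (t) (0) (by push_cast; linarith) (by push_cast; linarith), H (-3*t) (-3) (by push_cast; linarith) (by push_cast; linarith), H (1/6 - t) (-1) (by push_cast; linarith) (by push_cast; linarith), H (5/6 - t) (0) (by push_cast; linarith) (by push_cast; linarith), H (1/2 + t) (1) (by push_cast; linarith) (by push_cast; linarith)]; decide
            ·rw [H (2*t) (1) (by push_cast; linarith) (by push_cast; linarith), H (-6*t) (-5) (by push_cast; linarith) (by push_cast; linarith), H (t) (0) (by push_cast; linarith) (by push_cast; linarith), H (-3*t) (-3) (by push_cast; linarith) (by push_cast; linarith), H (1/6 - t) (-1) (by push_cast; linarith) (by push_cast; linarith), H (5/6 - t) (0) (by push_cast; linarith) (by push_cast; linarith), H (1/2 + t) (1) (by push_cast; linarith) (by push_cast; linarith)]; decide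
            ·rw [H (2*t) (1) (by push_cast; linarith) (by push_cast; linarith), H (-6*t) (-6) (by push_cast; linarith) (by push_cast; linarith), H (t) (0) (by push_cast; linarith) (by push_cast; linarith), H (-3*t) (-3) (by push_cast; linarith) (by push_cast; linarith), H (1/6 - t) (-1) (by push_cast; linarith) (by push_cast; linarith), H (5/6 - t) (-1) (by push_cast; linarith) (by push_cast; linarith), H (1/2 + t) (1) (by push_cast; linarith) (by push_cast; linarith)]; decide

theorem stmt_0 (p r : ℕ) (hp : p.Prime) (hp5 : 5 ≤ p) (hr : 1 ≤ r)
    (q : ℕ) (hq : q = p ^ r)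
    (a : ℕ) (ha : a ≤ q - 2) (ha' : 2 * a ≠ q - 1)
    (i : ℕ) (hi : i ≤ r - 1) :
    -2 * ⌊(2 * a * p ^ i : ℚ) / ((q : ℚ) - 1)⌋ - ⌊(-6 * a * p ^ i : ℚ) / ((q : ℚ) - 1)⌋
      + ⌊(a * p ^ i : ℚ) / ((q : ℚ) - 1)⌋ + ⌊(-3 * a * p ^ i : ℚ) / ((q : ℚ) - 1)⌋
    = -⌊Int.fract ((p ^ i : ℚ) / 6) - (a * p ^ i : ℚ) / ((q : ℚ) - 1)⌋
      - ⌊Int.fract ((5 * p ^ i : ℚ) / 6) - (a * p ^ i : ℚ) / ((q : ℚ) - 1)⌋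
      - ⌊Int.fract ((p ^ i : ℚ) / 2) + (a * p ^ i : ℚ) / ((q : ℚ) - 1)⌋
      - ⌊(a * p ^ i : ℚ) / ((q : ℚ) - 1)⌋ := by
  have h5q : 5 ≤ q := by
    rw [hq]; calc 5 ≤ p := hp5
      _ ≤ p ^ r := Nat.le_self_pow (by omega) p
  have hne : ((q:ℚ) - 1) ≠ 0 := by
    have : (5:ℚ) ≤ (q:ℚ) := by exact_mod_cast h5q
    intro h; linarith
  -- p is coprime to 6
  have hpd6 : ¬ p ∣ 6 := by
    intro h
    have h6 := Nat.le_of_dvd (by norm_num) h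
    interval_cases p <;> revert hp h <;> decide
  have hcp6 : Nat.Coprime p 6 := (Nat.Prime.coprime_iff_not_dvd hp).mpr hpd6
  have hcpi6 : Nat.Coprime (p ^ i) 6 := Nat.Coprime.pow_left i hcp6
  -- p^i mod 6 is 1 or 5
  have hm6 : p ^ i % 6 = 1 ∨ p ^ i % 6 = 5 := by
    have hg : Nat.gcd (p ^ i % 6) 6 = 1 := by
      rw [← Nat.gcd_rec]; exact Nat.coprime_comm.mp hcpi6
    have hlt : p ^ i % 6 < 6 := Nat.mod_lt _ (by norm_num)
    interval_cases h : p ^ i % 6 <;> revert hg <;> decide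
  -- p^i mod 2 = 1
  have hm2 : p ^ i % 2 = 1 := by
    have : p % 2 = 1 := Nat.odd_iff.mp (hp.odd_of_ne_two (by omega))
    have := Nat.pow_mod p i 2
    rw [‹p % 2 = 1›] at this
    simpa using this
  -- fract of p^i/2
  have hf2 : Int.fract ((p ^ i : ℚ) / 2) = 1/2 := by
    rw [show ((p:ℚ) ^ i) / 2 = ((p ^ i : ℕ) : ℚ) / ((2:ℕ):ℚ) by push_cast; ring,
      Int.fract_div_natCast_eq_div_natCast_mod, hm2]
    norm_num
  -- set up x, t, F
  set x : ℚ := (a * p ^ i : ℚ) / ((q : ℚ) - 1) with hxdef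
  set t : ℚ := Int.fract x with htdef
  set F : ℤ := ⌊x⌋ with hFdef
  have hx : x = t + (F:ℚ) := by rw [htdef, Int.fract]; ring
  have ht0 : 0 ≤ t := Int.fract_nonneg x
  have ht1 : t < 1 := Int.fract_lt_one x
  -- t ≠ 1/2
  have hth : t ≠ 1/2 := by
    intro ht
    have hx2 : ((a:ℚ) * (p:ℚ) ^ i) = (1/2 + (F:ℚ)) * ((q:ℚ) - 1) := by
      rw [← div_eq_iff hne, ← hxdef, hx, ht]
    have h3 : 2 * ((a:ℤ) * (p:ℤ) ^ i) = (2*F+1) * ((q:ℤ) - 1) := by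
      have : 2 * ((a:ℚ) * (p:ℚ) ^ i) = ((2*F+1 : ℤ):ℚ) * ((q:ℚ) - 1) := by
        push_cast; linear_combination 2 * hx2
      exact_mod_cast this
    have hdvd : ((q:ℤ) - 1) ∣ 2 * ((a:ℤ) * (p:ℤ) ^ i) := ⟨2*F+1, by linarith [h3]⟩
    have hdvdN : (q - 1) ∣ 2 * a * p ^ i := by
      have : ((q - 1 : ℕ) : ℤ) ∣ ((2 * a * p ^ i : ℕ) : ℤ) := by
        push_cast [Nat.cast_sub (by omega : 1 ≤ q)]
        convert hdvd using 1; ring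
      exact_mod_cast this
    have hndvd : ¬ p ∣ (q - 1) := by
      intro hd
      have hpq : p ∣ q := hq ▸ dvd_pow_self p (by omega)
      have : p ∣ q - (q - 1) := Nat.dvd_sub hpq hd
      rw [show q - (q - 1) = 1 by omega] at this
      exact Nat.Prime.one_lt hp |>.ne' (Nat.dvd_one.mp this)
    have hcop : Nat.Coprime (q - 1) (p ^ i) :=
      Nat.Coprime.pow_right i (Nat.coprime_comm.mp ((Nat.Prime.coprime_iff_not_dvd hp).mpr hndvd))
    have hdvd2a : (q - 1) ∣ 2 * a := by
      refine Nat.Coprime.dvd_of_dvd_mul_right hcop ?_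
      rwa [show 2 * a * p ^ i = 2 * a * p ^ i from rfl] at hdvdN
    obtain ⟨k, hk⟩ := hdvd2a
    have hk2 : k < 2 := by
      by_contra hcon
      push_neg at hcon
      have : (q - 1) * 2 ≤ (q - 1) * k := Nat.mul_le_mul_left _ hcon
      omega
    interval_cases k
    · -- a = 0
      have ha0 : a = 0 := by omega
      rw [ha0] at h3
      simp at h3
      rcases h3 with h3 | h3
      · omega
      · have : (q:ℤ) = 1 := by linarith
        omega
    · omega
  -- rewrite each floor term
  have e1 : ⌊(2 * a * p ^ i : ℚ) / ((q : ℚ) - 1)⌋ = ⌊2*t⌋ + 2*F := by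
    rw [show (2 * a * p ^ i : ℚ) / ((q : ℚ) - 1) = 2*t + ((2*F:ℤ):ℚ) by
      push_cast; rw [show 2*t + 2*(F:ℚ) = 2*(t + (F:ℚ)) by ring, ← hx, hxdef]; ring,
      Int.floor_add_intCast]
  have e2 : ⌊(-6 * a * p ^ i : ℚ) / ((q : ℚ) - 1)⌋ = ⌊-6*t⌋ + (-6)*F := by
    rw [show (-6 * a * p ^ i : ℚ) / ((q : ℚ) - 1) = -6*t + ((-6*F:ℤ):ℚ) by
      push_cast; rw [show -6*t + -6*(F:ℚ) = -6*(t + (F:ℚ)) by ring, ← hx, hxdef]; ring,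
      Int.floor_add_intCast]
  have e3 : ⌊x⌋ = ⌊t⌋ + F := by
    rw [show x = t + ((F:ℤ):ℚ) from hx, Int.floor_add_intCast]
  have e4 : ⌊(-3 * a * p ^ i : ℚ) / ((q : ℚ) - 1)⌋ = ⌊-3*t⌋ + (-3)*F := by
    rw [show (-3 * a * p ^ i : ℚ) / ((q : ℚ) - 1) = -3*t + ((-3*F:ℤ):ℚ) by
      push_cast; rw [show -3*t + -3*(F:ℚ) = -3*(t + (F:ℚ)) by ring, ← hx, hxdef]; ring,
      Int.floor_add_intCast]
  have e5 : ∀ c : ℚ, ⌊c - x⌋ = ⌊c - t⌋ + (-F) := by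
    intro c
    rw [show c - x = (c - t) + ((-F:ℤ):ℚ) by rw [hx]; push_cast; ring, Int.floor_add_intCast]
  have e6 : ⌊(1:ℚ)/2 + x⌋ = ⌊1/2 + t⌋ + F := by
    rw [show (1:ℚ)/2 + x = (1/2 + t) + ((F:ℤ):ℚ) by rw [hx]; ring, Int.floor_add_intCast]
  have ht00 : ⌊t⌋ = 0 := by rw [htdef]; exact Int.floor_fract x
  have K := key t ht0 ht1 hth
  rw [hf2]
  -- fract of p^i/6 and 5 p^i/6
  have hrw6 : Int.fract ((p ^ i : ℚ) / 6) = ((p ^ i % 6 : ℕ) : ℚ) / 6 := by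
    rw [show ((p:ℚ) ^ i) / 6 = ((p ^ i : ℕ) : ℚ) / ((6:ℕ):ℚ) by push_cast; ring,
      Int.fract_div_natCast_eq_div_natCast_mod]
    norm_num
  have hrw56 : Int.fract ((5 * p ^ i : ℚ) / 6) = ((5 * p ^ i % 6 : ℕ) : ℚ) / 6 := by
    rw [show (5 * (p:ℚ) ^ i) / 6 = ((5 * p ^ i : ℕ) : ℚ) / ((6:ℕ):ℚ) by push_cast; ring,
      Int.fract_div_natCast_eq_div_natCast_mod]
    norm_num
  have c1 : ((1:ℕ):ℚ)/6 = 1/6 := by norm_num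
  have c5 : ((5:ℕ):ℚ)/6 = 5/6 := by norm_num
  rcases hm6 with h6 | h6
  · have h56 : 5 * p ^ i % 6 = 5 := by rw [Nat.mul_mod, h6]
    rw [hrw6, hrw56, h6, h56, c1, c5, e1, e2, e4, e5 (1/6), e5 (5/6), e6]
    linarith [K, ht00]
  · have h56 : 5 * p ^ i % 6 = 1 := by rw [Nat.mul_mod, h6]
    rw [hrw6, hrw56, h6, h56, c1, c5, e1, e2, e4, e5 (5/6), e5 (1/6), e6]
    linarith [K, ht00]
end

section
/- Let p ≥ 5 be a prime and q = p^r with r ≥ 1. Then for every integer a with 0 < a ≤ q−2 and every integer i with 0 ≤ i ≤ r−1, one has −⌊2ap^i/(q−1)⌋ − ⌊−3ap^i/(q−1)⌋ = 1 − ⌊⟨p^i/3⟩ − ap^i/(q−1)⌋ − ⌊⟨2p^i/3⟩ − ap^i/(q−1)⌋ − ⌊⟨p^i/2⟩ + ap^i/(q−1)⌋. -/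
/-!
Put `x = a p^i / (q - 1)`. Since `p ∤ 6`, `⟨p^i/2⟩ = 1/2` and `{⟨p^i/3⟩, ⟨2p^i/3⟩} = {1/3, 2/3}`;
since `p^i` is prime to `q - 1` and `0 < a < q - 1`, `x` is not an integer. The claim then follows
from Hermite's identities `⌊2x⌋ = ⌊x⌋ + ⌊x + 1/2⌋`, `⌊-3x⌋ = ⌊-x⌋ + ⌊1/3 - x⌋ + ⌊2/3 - x⌋` and
from `⌊x⌋ + ⌊-x⌋ = -1`.
-/

open Int

section

variable {k : Type*} [Field k] [LinearOrder k] [IsOrderedRing k] [FloorRing k]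

theorem floor_two_mul_eq_floor_add_floor_add_half (x : k) :
    ⌊2 * x⌋ = ⌊x⌋ + ⌊x + 1 / 2⌋ := by
  have h₀ := floor_le x
  have h₁ := lt_floor_add_one x
  rcases lt_or_ge x (⌊x⌋ + 1 / 2) with h | h
  · have e₁ : ⌊x + 1 / 2⌋ = ⌊x⌋ := floor_eq_iff.mpr (by constructor <;> linarith)
    have e₂ : ⌊2 * x⌋ = 2 * ⌊x⌋ := floor_eq_iff.mpr (by push_cast; constructor <;> linarith)
    omega
  · have e₁ : ⌊x + 1 / 2⌋ = ⌊x⌋ + 1 := floor_eq_iff.mpr (by push_cast; constructor <;> linarith)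
    have e₂ : ⌊2 * x⌋ = 2 * ⌊x⌋ + 1 := floor_eq_iff.mpr (by push_cast; constructor <;> linarith)
    omega

theorem floor_three_mul_eq_floor_add_floor_add_third_add_floor_add_two_thirds (x : k) :
    ⌊3 * x⌋ = ⌊x⌋ + ⌊x + 1 / 3⌋ + ⌊x + 2 / 3⌋ := by
  have h₀ := floor_le x
  have h₁ := lt_floor_add_one x
  rcases lt_or_ge x (⌊x⌋ + 1 / 3) with h | h
  · have e₁ : ⌊x + 1 / 3⌋ = ⌊x⌋ := floor_eq_iff.mpr (by constructor <;> linarith)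
    have e₂ : ⌊x + 2 / 3⌋ = ⌊x⌋ := floor_eq_iff.mpr (by constructor <;> linarith)
    have e₃ : ⌊3 * x⌋ = 3 * ⌊x⌋ := floor_eq_iff.mpr (by push_cast; constructor <;> linarith)
    omega
  rcases lt_or_ge x (⌊x⌋ + 2 / 3) with h' | h'
  · have e₁ : ⌊x + 1 / 3⌋ = ⌊x⌋ := floor_eq_iff.mpr (by constructor <;> linarith)
    have e₂ : ⌊x + 2 / 3⌋ = ⌊x⌋ + 1 := floor_eq_iff.mpr (by push_cast; constructor <;> linarith)
    have e₃ : ⌊3 * x⌋ = 3 * ⌊x⌋ + 1 := floor_eq_iff.mpr (by push_cast; constructor <;> linarith)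
    omega
  · have e₁ : ⌊x + 1 / 3⌋ = ⌊x⌋ + 1 := floor_eq_iff.mpr (by push_cast; constructor <;> linarith)
    have e₂ : ⌊x + 2 / 3⌋ = ⌊x⌋ + 1 := floor_eq_iff.mpr (by push_cast; constructor <;> linarith)
    have e₃ : ⌊3 * x⌋ = 3 * ⌊x⌋ + 2 := floor_eq_iff.mpr (by push_cast; constructor <;> linarith)
    omega

theorem floor_add_floor_neg_of_fract_ne_zero {x : k} (hx : fract x ≠ 0) :
    ⌊x⌋ + ⌊-x⌋ = -1 := by
  have hceil : ((⌈x⌉ : ℤ) : k) = ((⌊x⌋ + 1 : ℤ) : k) := by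
    rw [ceil_eq_add_one_sub_fract hx, fract]
    push_cast
    ring
  rw [floor_neg, Int.cast_inj.mp hceil]
  ring

theorem neg_floor_two_mul_sub_floor_neg_three_mul {x : k} (hx : fract x ≠ 0) :
    -⌊2 * x⌋ - ⌊-3 * x⌋ = 1 - ⌊1 / 3 - x⌋ - ⌊2 / 3 - x⌋ - ⌊1 / 2 + x⌋ := by
  have h₂ := floor_two_mul_eq_floor_add_floor_add_half x
  have h₃ := floor_three_mul_eq_floor_add_floor_add_third_add_floor_add_two_thirds (-x)
  have hneg := floor_add_floor_neg_of_fract_ne_zero hx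
  rw [show 3 * -x = -3 * x by ring, neg_add_eq_sub, neg_add_eq_sub] at h₃
  rw [add_comm x] at h₂
  omega

theorem fract_natCast_div_two_of_not_dvd {m : ℕ} (hm : ¬ 2 ∣ m) :
    fract ((m : k) / 2) = 1 / 2 := by
  have h := fract_div_natCast_eq_div_natCast_mod (k := k) (m := m) (n := 2)
  rw [Nat.two_dvd_ne_zero.mp hm] at h
  exact_mod_cast h

theorem fract_natCast_div_three_of_not_dvd {m : ℕ} (hm : ¬ 3 ∣ m) :
    fract ((m : k) / 3) = 1 / 3 ∧ fract (2 * (m : k) / 3) = 2 / 3 ∨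
      fract ((m : k) / 3) = 2 / 3 ∧ fract (2 * (m : k) / 3) = 1 / 3 := by
  have h₁ := fract_div_natCast_eq_div_natCast_mod (k := k) (m := m) (n := 3)
  have h₂ := fract_div_natCast_eq_div_natCast_mod (k := k) (m := 2 * m) (n := 3)
  push_cast at h₁ h₂
  rcases (by omega : m % 3 = 1 ∨ m % 3 = 2) with h | h
  · rw [h] at h₁
    rw [show 2 * m % 3 = 2 by omega] at h₂
    exact Or.inl ⟨by exact_mod_cast h₁, by exact_mod_cast h₂⟩
  · rw [h] at h₁
    rw [show 2 * m % 3 = 1 by omega] at h₂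
    exact Or.inr ⟨by exact_mod_cast h₁, by exact_mod_cast h₂⟩

theorem fract_natCast_mul_div_ne_zero {n m d : ℕ} (hd : d.Coprime m) (hn₀ : 0 < n) (hn : n < d) :
    fract ((n * m : k) / d) ≠ 0 := by
  have hmod : n * m % d ≠ 0 := fun h =>
    absurd (Nat.le_of_dvd hn₀ (hd.dvd_of_dvd_mul_right (Nat.dvd_of_mod_eq_zero h))) (by omega)
  have h := fract_div_natCast_eq_div_natCast_mod (k := k) (m := n * m) (n := d)
  push_cast at h
  rw [h]
  exact div_ne_zero (by exact_mod_cast hmod) (by exact_mod_cast (by omega : d ≠ 0))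

end

theorem not_dvd_pow_of_prime_of_lt {ℓ p : ℕ} (hℓ : ℓ.Prime) (hp : p.Prime) (hlt : ℓ < p) (i : ℕ) :
    ¬ ℓ ∣ p ^ i := fun h =>
  hlt.ne ((Nat.prime_dvd_prime_iff_eq hℓ hp).mp (hℓ.dvd_of_dvd_pow h))

theorem stmt_1_general (p r : ℕ) (hp : p.Prime) (hp5 : 5 ≤ p) (hr : 1 ≤ r)
    (q : ℕ) (hq : q = p ^ r)
    (a : ℕ) (ha0 : 0 < a) (ha : a ≤ q - 2) (i : ℕ) :
    -⌊(2 * a * p ^ i : ℚ) / ((q : ℚ) - 1)⌋ - ⌊(-3 * a * p ^ i : ℚ) / ((q : ℚ) - 1)⌋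
    = 1 - ⌊Int.fract ((p ^ i : ℚ) / 3) - (a * p ^ i : ℚ) / ((q : ℚ) - 1)⌋
      - ⌊Int.fract ((2 * p ^ i : ℚ) / 3) - (a * p ^ i : ℚ) / ((q : ℚ) - 1)⌋
      - ⌊Int.fract ((p ^ i : ℚ) / 2) + (a * p ^ i : ℚ) / ((q : ℚ) - 1)⌋ := by
  have hcop : (q - 1).Coprime (p ^ i) := by
    have hpq : p ∣ q := hq ▸ dvd_pow_self p (by omega)
    exact (((Nat.coprime_self_sub_left (by omega)).mpr (Nat.coprime_one_left q)).coprime_dvd_right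
      hpq).pow_right i
  have hx : fract ((a * p ^ i : ℚ) / ((q : ℚ) - 1)) ≠ 0 := by
    have := fract_natCast_mul_div_ne_zero (k := ℚ) hcop ha0 (by omega)
    rwa [Nat.cast_pred (by omega), Nat.cast_pow] at this
  rw [show (2 * a * p ^ i : ℚ) / ((q : ℚ) - 1) = 2 * ((a * p ^ i : ℚ) / ((q : ℚ) - 1)) by ring,
    show (-3 * a * p ^ i : ℚ) / ((q : ℚ) - 1) = -3 * ((a * p ^ i : ℚ) / ((q : ℚ) - 1)) by ring,
    neg_floor_two_mul_sub_floor_neg_three_mul hx]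
  have h₂ := fract_natCast_div_two_of_not_dvd (k := ℚ)
    (not_dvd_pow_of_prime_of_lt Nat.prime_two hp (by omega) i)
  have h₃ := fract_natCast_div_three_of_not_dvd (k := ℚ)
    (not_dvd_pow_of_prime_of_lt Nat.prime_three hp (by omega) i)
  push_cast at h₂ h₃
  rcases h₃ with ⟨h₁, h₂'⟩ | ⟨h₁, h₂'⟩
  · rw [h₁, h₂', h₂]
  · rw [h₁, h₂', h₂]
    ring

theorem stmt_1 (p r : ℕ) (hp : p.Prime) (hp5 : 5 ≤ p) (hr : 1 ≤ r)
    (q : ℕ) (hq : q = p ^ r)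
    (a : ℕ) (ha0 : 0 < a) (ha : a ≤ q - 2)
    (i : ℕ) (hi : i ≤ r - 1) :
    -⌊(2 * a * p ^ i : ℚ) / ((q : ℚ) - 1)⌋ - ⌊(-3 * a * p ^ i : ℚ) / ((q : ℚ) - 1)⌋
    = 1 - ⌊Int.fract ((p ^ i : ℚ) / 3) - (a * p ^ i : ℚ) / ((q : ℚ) - 1)⌋
      - ⌊Int.fract ((2 * p ^ i : ℚ) / 3) - (a * p ^ i : ℚ) / ((q : ℚ) - 1)⌋
      - ⌊Int.fract ((p ^ i : ℚ) / 2) + (a * p ^ i : ℚ) / ((q : ℚ) - 1)⌋ :=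
  stmt_1_general p r hp hp5 hr q hq a ha0 ha i
end

section
/- Let p ≥ 5 be a prime and q = p^r with r ≥ 1, and let x ∈ F_q be nonzero. Then (1/(q(q−1))) · Σ_χ g(χ)·g(χ²)·g(χ̄³)·χ(−27/(4x)) = 1/q − 1 + (1/(q−1)) · Σ_χ J(χ̄², χ³)·χ̄(27/(4x)), where both sums run over all multiplicative characters χ of F_q. -/
open Finset

private lemma gaussSum_one_eq_neg_one {F : Type} [Field F] [Fintype F] [DecidableEq F]
    (ψ : AddChar F ℂ) (hψ : ψ ≠ 1) : gaussSum (1 : MulChar F ℂ) ψ = -1 := by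
  have h0 : ∑ a : F, ψ a = 0 := AddChar.sum_eq_zero_of_ne_one hψ
  have h1 : gaussSum (1 : MulChar F ℂ) ψ = ∑ t ∈ univ \ {(0 : F)}, ψ t := by
    rw [gaussSum, Finset.sum_eq_sum_sdiff_singleton_add (mem_univ (0 : F)),
      MulChar.map_zero, zero_mul, add_zero]
    refine Finset.sum_congr rfl fun t ht => ?_
    simp only [mem_sdiff, mem_singleton, mem_univ, true_and] at ht
    rw [MulChar.one_apply (isUnit_iff_ne_zero.mpr ht), one_mul]
  have h2 := Finset.sum_eq_sum_sdiff_singleton_add (mem_univ (0 : F)) (fun t => ψ t)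
  rw [AddChar.map_zero_eq_one] at h2
  rw [h1]
  linear_combination h0 - h2

theorem stmt_2 (p r : ℕ) (hp : p.Prime) (hp5 : 5 ≤ p) (hr : 1 ≤ r)
    (F : Type) [Field F] [Fintype F] [DecidableEq F]
    (hF : Fintype.card F = p ^ r)
    [Fintype (MulChar F ℂ)]
    (ψ : AddChar F ℂ) (hψ : ψ ≠ 1)
    (x : F) (hx : x ≠ 0) :
    (1 / ((Fintype.card F : ℂ) * ((Fintype.card F : ℂ) - 1))) *
      ∑ χ : MulChar F ℂ,
        gaussSum χ ψ * gaussSum (χ ^ 2) ψ * gaussSum (χ⁻¹ ^ 3) ψ * χ (-27 / (4 * x))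
    = 1 / (Fintype.card F : ℂ) - 1 +
      (1 / ((Fintype.card F : ℂ) - 1)) *
        ∑ χ : MulChar F ℂ, jacobiSum (χ⁻¹ ^ 2) (χ ^ 3) * χ⁻¹ (27 / (4 * x)) := by
  classical
  set q : ℂ := (Fintype.card F : ℂ) with hq
  have hψp : ψ.IsPrimitive := AddChar.IsPrimitive.of_ne_one hψ
  -- characteristic facts
  have hchar : ringChar F = p := by
    have hprime : (ringChar F).Prime := CharP.char_is_prime F (ringChar F)
    have hdvd : ringChar F ∣ Fintype.card F :=
      (CharP.cast_eq_zero_iff F (ringChar F) (Fintype.card F)).mp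
        (FiniteField.cast_card_eq_zero F)
    rw [hF] at hdvd
    exact (Nat.prime_dvd_prime_iff_eq hprime hp).mp (hprime.dvd_of_dvd_pow hdvd)
  have hcp : CharP F p := hchar ▸ ringChar.charP F
  have hnat : ∀ n : ℕ, n ≠ 0 → n < p → ((n : F) ≠ 0) := by
    intro n hn hnp h
    have := (CharP.cast_eq_zero_iff F p n).mp h
    have := Nat.le_of_dvd (Nat.pos_of_ne_zero hn) this
    omega
  have h27 : (27 : F) ≠ 0 := by
    intro h
    have h' : ((27 : ℕ) : F) = 0 := by exact_mod_cast h
    have hd := (CharP.cast_eq_zero_iff F p 27).mp h'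
    have h33 : (27 : ℕ) = 3 ^ 3 := by norm_num
    rw [h33] at hd
    have := Nat.le_of_dvd (by norm_num) (hp.dvd_of_dvd_pow hd)
    omega
  have h4 : (4 : F) ≠ 0 := by
    intro h
    have h' : ((4 : ℕ) : F) = 0 := by exact_mod_cast h
    have hd := (CharP.cast_eq_zero_iff F p 4).mp h'
    have h22 : (4 : ℕ) = 2 ^ 2 := by norm_num
    rw [h22] at hd
    have := Nat.le_of_dvd (by norm_num) (hp.dvd_of_dvd_pow hd)
    omega
  have h4x : (4 : F) * x ≠ 0 := mul_ne_zero h4 hx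
  have hb : (27 : F) / (4 * x) ≠ 0 := div_ne_zero h27 h4x
  have ha : (-27 : F) / (4 * x) = -((27 : F) / (4 * x)) := by rw [neg_div]
  have ha0 : (-27 : F) / (4 * x) ≠ 0 := by rw [ha]; exact neg_ne_zero.mpr hb
  -- card facts
  have hcard1 : 1 < Fintype.card F := Fintype.one_lt_card
  have hq0 : q ≠ 0 := Nat.cast_ne_zero.mpr (by omega)
  have hq1 : q - 1 ≠ 0 := by
    rw [sub_ne_zero]
    intro h
    rw [hq] at h
    have : Fintype.card F = 1 := by exact_mod_cast h
    omega
  -- reindex the LHS sum via χ ↦ χ⁻¹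
  have hre : ∑ χ : MulChar F ℂ,
        gaussSum χ ψ * gaussSum (χ ^ 2) ψ * gaussSum (χ⁻¹ ^ 3) ψ * χ (-27 / (4 * x))
      = ∑ χ : MulChar F ℂ,
        gaussSum χ⁻¹ ψ * gaussSum (χ⁻¹ ^ 2) ψ * gaussSum (χ ^ 3) ψ * χ⁻¹ (-27 / (4 * x)) := by
    refine Fintype.sum_equiv (Equiv.inv (MulChar F ℂ)) _ _ fun χ => ?_
    simp [Equiv.inv_apply]
  rw [hre]
  -- pointwise identity for nontrivial characters
  have key : ∀ χ : MulChar F ℂ, χ ≠ 1 →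
      gaussSum χ⁻¹ ψ * gaussSum (χ⁻¹ ^ 2) ψ * gaussSum (χ ^ 3) ψ * χ⁻¹ (-27 / (4 * x))
      = q * (jacobiSum (χ⁻¹ ^ 2) (χ ^ 3) * χ⁻¹ (27 / (4 * x))) := by
    intro χ hχ
    have hmul : (χ⁻¹ ^ 2) * (χ ^ 3) = χ := by group
    have hJ := jacobiSum_mul_nontrivial (χ := χ⁻¹ ^ 2) (φ := χ ^ 3) (hmul ▸ hχ) ψ
    rw [hmul] at hJ
    have e1 : gaussSum (χ⁻¹ ^ 2) ψ * gaussSum (χ ^ 3) ψ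
        = gaussSum χ ψ * jacobiSum (χ⁻¹ ^ 2) (χ ^ 3) := hJ.symm
    have hg : gaussSum χ ψ * gaussSum χ⁻¹ ψ = χ⁻¹ (-1) * q := by
      have h1 := gaussSum_mul_gaussSum_eq_card hχ hψp
      have h2 := mul_gaussSum_inv_eq_gaussSum χ⁻¹ ψ
      calc gaussSum χ ψ * gaussSum χ⁻¹ ψ
          = gaussSum χ ψ * (χ⁻¹ (-1) * gaussSum χ⁻¹ ψ⁻¹) := by rw [h2]
        _ = χ⁻¹ (-1) * (gaussSum χ ψ * gaussSum χ⁻¹ ψ⁻¹) := by ring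
        _ = χ⁻¹ (-1) * q := by rw [h1]
    have hc : χ⁻¹ (-1) * χ⁻¹ (-1) = 1 := by
      rw [← map_mul]; norm_num
    have hav : χ⁻¹ (-27 / (4 * x)) = χ⁻¹ (-1) * χ⁻¹ (27 / (4 * x)) := by
      rw [ha, ← neg_one_mul, map_mul]
    rw [hav]
    linear_combination (gaussSum χ⁻¹ ψ * (χ⁻¹ (-1) * χ⁻¹ ((27 : F) / (4 * x)))) * e1
      + (jacobiSum (χ⁻¹ ^ 2) (χ ^ 3) * (χ⁻¹ (-1) * χ⁻¹ ((27 : F) / (4 * x)))) * hg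
      + (q * jacobiSum (χ⁻¹ ^ 2) (χ ^ 3) * χ⁻¹ ((27 : F) / (4 * x))) * hc
  -- split off the trivial character in both sums
  rw [Finset.sum_eq_sum_sdiff_singleton_add (mem_univ (1 : MulChar F ℂ))
      (fun χ => gaussSum χ⁻¹ ψ * gaussSum (χ⁻¹ ^ 2) ψ * gaussSum (χ ^ 3) ψ
        * χ⁻¹ (-27 / (4 * x))),
    Finset.sum_eq_sum_sdiff_singleton_add (mem_univ (1 : MulChar F ℂ))
      (fun χ => jacobiSum (χ⁻¹ ^ 2) (χ ^ 3) * χ⁻¹ (27 / (4 * x)))]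
  have htriv1 : gaussSum (1 : MulChar F ℂ)⁻¹ ψ * gaussSum ((1 : MulChar F ℂ)⁻¹ ^ 2) ψ
      * gaussSum ((1 : MulChar F ℂ) ^ 3) ψ * (1 : MulChar F ℂ)⁻¹ (-27 / (4 * x)) = -1 := by
    rw [inv_one, one_pow, one_pow, gaussSum_one_eq_neg_one ψ hψ,
      MulChar.one_apply (isUnit_iff_ne_zero.mpr ha0)]
    ring
  have htriv2 : jacobiSum ((1 : MulChar F ℂ)⁻¹ ^ 2) ((1 : MulChar F ℂ) ^ 3)
      * (1 : MulChar F ℂ)⁻¹ (27 / (4 * x)) = q - 2 := by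
    rw [inv_one, one_pow, one_pow, jacobiSum_one_one,
      MulChar.one_apply (isUnit_iff_ne_zero.mpr hb), mul_one]
  rw [htriv1, htriv2]
  rw [Finset.sum_congr rfl (fun χ hχ => key χ (by
    simp only [mem_sdiff, mem_singleton, mem_univ, true_and] at hχ; exact hχ))]
  rw [← Finset.mul_sum]
  set S : ℂ := ∑ χ ∈ univ \ {(1 : MulChar F ℂ)},
    jacobiSum (χ⁻¹ ^ 2) (χ ^ 3) * χ⁻¹ (27 / (4 * x))
  field_simp
  ring
end

section
/- Let p ≥ 5 be a prime and q = p^r with r ≥ 1, and let x ∈ F_q be nonzero. Then (1/(q(q−1))) · Σ_χ g(χ)·g(χ²)·g(χ̄³)·χ(−27/(4x)) = 1/q − 1 + N, where the sum runs over all multiplicative characters χ of F_q and N = #{y ∈ F_q : 27y²(1−y) = 4x} is the number of solutions y in F_q of the equation 27y²(1−y) = 4x. -/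
/-!
Expanding the three Gauss sums and summing over `χ` first, orthogonality of characters keeps
only the triples of units with `a = c³ / (b² u)`, where `u = -27 / (4x)`; so the sum is
`(q - 1) · ∑_{b, c ≠ 0} ψ (c³ / (b² u) + b + c)`. The substitution `b = -c z`, `c = d z²`
turns the argument of `ψ` into `d · (z² (1 - z) + u⁻¹)`, and summing `ψ` over `d ≠ 0` gives
`q - 1` or `-1` according as `27 z² (1 - z) = 4x` or not. Hence the sum is
`(q - 1) (q N - (q - 1))`.
-/
open Finset

theorem Fintype.sum_eq_add_sum_units {G₀ M : Type*} [GroupWithZero G₀] [Fintype G₀]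
    [DecidableEq G₀] [AddCommMonoid M] (f : G₀ → M) :
    ∑ a, f a = f 0 + ∑ u : G₀ˣ, f u := by
  rw [Fintype.sum_eq_add_sum_compl 0, sum_subtype (p := (· ≠ 0)) _ (fun _ ↦ by simp) f]
  exact congrArg _ (Fintype.sum_equiv unitsEquivNeZero.symm _ _ fun _ ↦ rfl)

theorem card_filter_units_eq_card_filter {G₀ : Type*} [GroupWithZero G₀] [Fintype G₀]
    [DecidableEq G₀] {P : G₀ → Prop} [DecidablePred P] (h0 : ¬P 0) :
    #{z : G₀ˣ | P z} = #{z : G₀ | P z} := by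
  refine card_bij (fun z _ ↦ (z : G₀)) (by simp) (fun _ _ _ _ h ↦ Units.val_injective h) ?_
  intro z hz
  have hz0 : z ≠ 0 := by rintro rfl; simp_all
  exact ⟨Units.mk0 z hz0, by simpa using hz, rfl⟩

theorem isUnit_natCast_of_coprime_card {R : Type*} [CommRing R] [Fintype R] {n : ℕ}
    (h : n.Coprime (Fintype.card R)) : IsUnit (n : R) := by
  obtain ⟨a, b, hab⟩ := h.isCoprime
  apply_fun ((↑) : ℤ → R) at hab
  push_cast at hab
  rw [Nat.cast_card_eq_zero, mul_zero, add_zero] at hab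
  exact .of_mul_eq_one _ (by rwa [mul_comm] at hab)

theorem natCast_pow_ne_zero_of_card_eq_pow {R : Type*} [CommRing R] [Nontrivial R] [Fintype R]
    {p r ℓ : ℕ} (hp : p.Prime) (hℓ : ℓ.Prime) (hne : ℓ ≠ p) (hR : Fintype.card R = p ^ r)
    (k : ℕ) : ((ℓ ^ k : ℕ) : R) ≠ 0 :=
  (isUnit_natCast_of_coprime_card (by
    rw [hR]; exact ((Nat.coprime_primes hℓ hp).mpr hne).pow k r)).ne_zero

namespace MulChar

variable {M R : Type*} [CommMonoid M] [Finite M] [CommRing R] [IsDomain R]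
  [HasEnoughRootsOfUnity R (Monoid.exponent Mˣ)] [Fintype (MulChar M R)]

theorem sum_apply_eq_ite [DecidableEq M] (a : M) :
    ∑ χ : MulChar M R, χ a = if a = 1 then (Nat.card Mˣ : R) else 0 := by
  split_ifs with ha
  · simp [ha, ← Nat.card_eq_fintype_card, card_eq_card_units_of_hasEnoughRootsOfUnity]
  · obtain ⟨χ, hχ⟩ := exists_apply_ne_one_of_hasEnoughRootsOfUnity M R ha
    refine eq_zero_of_mul_eq_self_left hχ ?_
    simp only [mul_sum, ← mul_apply]
    exact Fintype.sum_bijective _ (Group.mulLeft_bijective χ) _ _ fun _ ↦ rfl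

end MulChar

variable {F R : Type*} [Field F] [Fintype F] [DecidableEq F] [CommRing R]

theorem gaussSum_eq_sum_units [Nontrivial R] (χ : MulChar F R) (ψ : AddChar F R) :
    gaussSum χ ψ = ∑ t : Fˣ, χ t * ψ t := by
  rw [gaussSum, Fintype.sum_eq_add_sum_units, MulChar.map_zero, zero_mul, zero_add]

theorem AddChar.sum_units_mulShift [IsDomain R] {ψ : AddChar F R} (hψ : ψ ≠ 1) (t : F) :
    ∑ b : Fˣ, ψ (b * t) = (if t = 0 then (Fintype.card F : R) else 0) - 1 := by
  have h := sum_mulShift t (.of_ne_one hψ)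
  rw [Fintype.sum_eq_add_sum_units, zero_mul, map_zero_eq_one] at h
  rw [eq_sub_iff_add_eq, add_comm, h, Nat.cast_ite, Nat.cast_zero]

theorem gaussSum_mul_gaussSum_sq_mul_gaussSum_inv_cube_mul [Nontrivial R] (χ : MulChar F R)
    (ψ : AddChar F R) (u : Fˣ) :
    gaussSum χ ψ * gaussSum (χ ^ 2) ψ * gaussSum (χ⁻¹ ^ 3) ψ * χ u =
      ∑ c : Fˣ, ∑ b : Fˣ, ∑ a : Fˣ, χ ↑(a * (b ^ 2 * u * c⁻¹ ^ 3)) * ψ (a + b + c) := by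
  simp only [gaussSum_eq_sum_units, sum_mul, mul_sum]
  refine sum_congr rfl fun c _ ↦ sum_congr rfl fun b _ ↦ sum_congr rfl fun a _ ↦ ?_
  rw [MulChar.pow_apply' _ two_ne_zero, MulChar.pow_apply' _ three_ne_zero, MulChar.inv_apply',
    AddChar.map_add_eq_mul, AddChar.map_add_eq_mul]
  push_cast
  simp only [map_mul, map_pow]
  ring

theorem sum_mulChar_gaussSum_mul_gaussSum_sq_mul_gaussSum_inv_cube_mul [IsDomain R]
    [HasEnoughRootsOfUnity R (Monoid.exponent Fˣ)] [Fintype (MulChar F R)]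
    (ψ : AddChar F R) (u : Fˣ) :
    ∑ χ : MulChar F R, gaussSum χ ψ * gaussSum (χ ^ 2) ψ * gaussSum (χ⁻¹ ^ 3) ψ * χ u =
      Fintype.card Fˣ * ∑ c : Fˣ, ∑ b : Fˣ, ψ ((c : F) ^ 3 / (b ^ 2 * u) + b + c) := by
  simp only [gaussSum_mul_gaussSum_sq_mul_gaussSum_inv_cube_mul,
    sum_comm (s := (univ : Finset (MulChar F R))), ← sum_mul, MulChar.sum_apply_eq_ite,
    Units.val_eq_one, mul_eq_one_iff_eq_inv, ite_mul, zero_mul, sum_ite_eq', mem_univ, if_true,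
    Nat.card_eq_fintype_card, mul_sum]
  congr! 4
  push_cast
  field_simp

theorem sum_units_sum_units_addChar_cube_div [IsDomain R] {ψ : AddChar F R} (hψ : ψ ≠ 1)
    (u : Fˣ) :
    ∑ c : Fˣ, ∑ b : Fˣ, ψ ((c : F) ^ 3 / (b ^ 2 * u) + b + c) =
      Fintype.card F * #{z : Fˣ | (z : F) ^ 2 * (1 - z) + (u : F)⁻¹ = 0} - Fintype.card Fˣ := by
  calc _ = ∑ c : Fˣ, ∑ z : Fˣ, ψ (c * (z : F)⁻¹ ^ 2 * (z ^ 2 * (1 - z) + (u : F)⁻¹)) := by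
        refine sum_congr rfl fun c _ ↦ (Fintype.sum_equiv (Equiv.mulLeft (-c)) _ _ fun z ↦ ?_).symm
        simp only [Equiv.coe_mulLeft, Units.val_mul, Units.val_neg]
        congr 1
        field_simp
        ring
    _ = ∑ z : Fˣ, ∑ d : Fˣ, ψ (d * ((z : F) ^ 2 * (1 - z) + (u : F)⁻¹)) := by
        rw [sum_comm]
        refine sum_congr rfl fun z _ ↦
          (Fintype.sum_equiv (Equiv.mulRight (z ^ 2)) _ _ fun d ↦ ?_).symm
        simp only [Equiv.coe_mulRight, Units.val_mul, Units.val_pow_eq_pow_val]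
        field_simp
    _ = _ := by
        simp only [AddChar.sum_units_mulShift hψ, sum_sub_distrib, sum_ite, sum_const_zero,
          add_zero, sum_const, card_univ, nsmul_eq_mul, mul_one, mul_comm]

open Finset in
theorem stmt_3_general (p r : ℕ) (hp : p.Prime) (hp5 : 5 ≤ p)
    (F : Type) [Field F] [Fintype F] [DecidableEq F]
    (hF : Fintype.card F = p ^ r)
    [Fintype (MulChar F ℂ)]
    (ψ : AddChar F ℂ) (hψ : ψ ≠ 1)
    (x : F) (hx : x ≠ 0) :
    (1 / ((Fintype.card F : ℂ) * ((Fintype.card F : ℂ) - 1))) *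
      ∑ χ : MulChar F ℂ,
        gaussSum χ ψ * gaussSum (χ ^ 2) ψ * gaussSum (χ⁻¹ ^ 3) ψ * χ (-27 / (4 * x))
    = 1 / (Fintype.card F : ℂ) - 1 +
      ((univ.filter fun y : F => 27 * y ^ 2 * (1 - y) = 4 * x).card : ℂ) := by
  have h27 : (27 : F) ≠ 0 := by
    simpa using natCast_pow_ne_zero_of_card_eq_pow hp Nat.prime_three (by omega) hF 3
  have h4 : (4 : F) ≠ 0 := by
    simpa using natCast_pow_ne_zero_of_card_eq_pow hp Nat.prime_two (by omega) hF 2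
  let u : Fˣ := Units.mk0 (-27 / (4 * x)) (by simp [h27, h4, hx])
  have hcount : #{z : Fˣ | (z : F) ^ 2 * (1 - z) + (u : F)⁻¹ = 0}
      = #{y : F | 27 * y ^ 2 * (1 - y) = 4 * x} := by
    rw [card_filter_units_eq_card_filter (P := fun z : F ↦ z ^ 2 * (1 - z) + (u : F)⁻¹ = 0)
      (by simp [u, h27, h4, hx])]
    congr 1
    refine filter_congr fun y _ ↦ ?_
    simp only [u, Units.val_mk0, inv_div]
    constructor <;> intro h <;> field_simp at h ⊢ <;> linear_combination h
  have hq : (Fintype.card F : ℂ) ≠ 0 := Nat.cast_ne_zero.mpr Fintype.card_ne_zero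
  have hq1 : (Fintype.card F : ℂ) - 1 ≠ 0 :=
    sub_ne_zero.mpr (by exact_mod_cast Fintype.one_lt_card.ne')
  rw [show -27 / (4 * x) = (u : F) from rfl,
    sum_mulChar_gaussSum_mul_gaussSum_sq_mul_gaussSum_inv_cube_mul,
    sum_units_sum_units_addChar_cube_div hψ, hcount, Fintype.card_units,
    Nat.cast_sub Fintype.card_pos, Nat.cast_one]
  field_simp
  ring

open Finset in
theorem stmt_3 (p r : ℕ) (hp : p.Prime) (hp5 : 5 ≤ p) (hr : 1 ≤ r)
    (F : Type) [Field F] [Fintype F] [DecidableEq F]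
    (hF : Fintype.card F = p ^ r)
    [Fintype (MulChar F ℂ)]
    (ψ : AddChar F ℂ) (hψ : ψ ≠ 1)
    (x : F) (hx : x ≠ 0) :
    (1 / ((Fintype.card F : ℂ) * ((Fintype.card F : ℂ) - 1))) *
      ∑ χ : MulChar F ℂ,
        gaussSum χ ψ * gaussSum (χ ^ 2) ψ * gaussSum (χ⁻¹ ^ 3) ψ * χ (-27 / (4 * x))
    = 1 / (Fintype.card F : ℂ) - 1 +
      ((univ.filter fun y : F => 27 * y ^ 2 * (1 - y) = 4 * x).card : ℂ) :=
  stmt_3_general p r hp hp5 F hF ψ hψ x hx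
end

section
/- Let p ≥ 5 be a prime and q = p^r with r ≥ 1, and let x ∈ F_q with x ≠ 0 and x ≠ 1. Then the equation 27y²(1−y) = 4x has exactly one solution y in F_q if and only if φ(3x(1−x)) = −1, i.e., if and only if 3x(1−x) is a nonsquare in F_q. -/
open Polynomial

lemma fixed_in_base {F K : Type} [Field F] [Fintype F] [Field K] [Algebra F K]
    (z : K) (h : z ^ Fintype.card F = z) : ∃ t : F, algebraMap F K t = z := by
  classical
  by_contra hc
  push_neg at hc
  set q := Fintype.card F with hq
  have hq2 : 2 ≤ q := Fintype.one_lt_card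
  set G : K[X] := X ^ q - X with hG
  have hGne : G ≠ 0 := by
    intro h0
    have hXX : (X : K[X]) ^ q = X := by
      have := sub_eq_zero.mp (hG ▸ h0.symm ▸ rfl : (X:K[X]) ^ q - X = 0)
      exact this
    have := congrArg Polynomial.degree hXX
    rw [Polynomial.degree_X_pow, Polynomial.degree_X] at this
    have : q = 1 := by exact_mod_cast this
    omega
  have hdeg : G.natDegree ≤ q := by
    refine (Polynomial.natDegree_sub_le _ _).trans ?_
    simp [Polynomial.natDegree_X_pow]
    omega
  set s : Finset K := Finset.univ.image (algebraMap F K) with hs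
  have hzs : z ∉ s := by
    intro hzmem
    obtain ⟨t, _, ht⟩ := Finset.mem_image.mp hzmem
    exact hc t ht
  have hcards : s.card = q := by
    rw [hs, Finset.card_image_of_injective _ (algebraMap F K).injective,
      Finset.card_univ]
  have hsub : insert z s ⊆ G.roots.toFinset := by
    intro u hu
    rw [Multiset.mem_toFinset, Polynomial.mem_roots hGne]
    rcases Finset.mem_insert.mp hu with h1 | h1
    · subst h1
      simp [hG, Polynomial.IsRoot, h]
    · obtain ⟨t, _, ht⟩ := Finset.mem_image.mp h1
      subst ht
      have htq : t ^ q = t := by rw [hq]; exact FiniteField.pow_card t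
      simp [hG, Polynomial.IsRoot, ← map_pow, htq]
  have hle : (insert z s).card ≤ q := by
    calc (insert z s).card ≤ G.roots.toFinset.card := Finset.card_le_card hsub
    _ ≤ Multiset.card G.roots := G.roots.toFinset_card_le
    _ ≤ G.natDegree := Polynomial.card_roots' G
    _ ≤ q := hdeg
  rw [Finset.card_insert_of_notMem hzs, hcards] at hle
  omega

lemma no_root_isSquare (p r : ℕ) (hp : p.Prime) (hp5 : 5 ≤ p) (hr : 1 ≤ r)
    (F : Type) [Field F] [Fintype F]
    (hF : Fintype.card F = p ^ r)
    (x : F) (hx0 : x ≠ 0) (hx1 : x ≠ 1)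
    (h : ∀ a : F, 27 * a ^ 2 * (1 - a) ≠ 4 * x) :
    IsSquare (3 * x * (1 - x)) := by
  haveI hfp : Fact p.Prime := ⟨hp⟩
  haveI hcF : CharP F p := by
    have h0 : ((p : F)) ^ r = 0 := by
      have hcc := FiniteField.cast_card_eq_zero F
      rw [hF] at hcc
      exact_mod_cast hcc
    have hp0 : (p : F) = 0 := by
      have := pow_eq_zero_iff (n := r) (by omega) |>.mp h0
      exact this
    have hrc : ringChar F = p := CharP.ringChar_of_prime_eq_zero hp hp0
    exact hrc ▸ ringChar.charP F
  set K := AlgebraicClosure F with hK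
  haveI hcK : CharP K p := charP_of_injective_algebraMap (algebraMap F K).injective p
  set x' : K := algebraMap F K x with hx'
  have h3K : (3 : K) ≠ 0 := by
    intro hh
    have h3 : ((3 : ℕ) : K) = 0 := by exact_mod_cast hh
    have := (CharP.cast_eq_zero_iff K p 3).mp h3
    have := Nat.le_of_dvd (by norm_num) this
    omega
  have h27K : (27 : K) ≠ 0 := by
    have : (27 : K) = 3 ^ 3 := by norm_num
    rw [this]
    exact pow_ne_zero _ h3K
  -- a root a of the cubic in K
  obtain ⟨a, haroot⟩ : ∃ a : K, ((C (-27 : K)) * X ^ 3 + C (27 : K) * X ^ 2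
      + C (-(4 * x'))).IsRoot a := by
    apply IsAlgClosed.exists_root
    have : ((C (-27 : K)) * X ^ 3 + C (27 : K) * X ^ 2 + C (-(4 * x'))).degree = 3 := by
      compute_degree!
    rw [this]
    norm_num
  have ha : 27 * a ^ 2 * (1 - a) = 4 * x' := by
    have := haroot
    simp only [Polynomial.IsRoot, Polynomial.eval_add, Polynomial.eval_mul,
      Polynomial.eval_pow, Polynomial.eval_C, Polynomial.eval_X] at this
    linear_combination this
  -- Frobenius facts
  have hfix : ∀ t : F, (algebraMap F K t) ^ (p ^ r) = algebraMap F K t := by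
    intro t
    rw [← map_pow, ← hF, FiniteField.pow_card]
  have e27 : (27 : K) ^ (p ^ r) = 27 := by
    have := hfix 27
    rwa [map_ofNat] at this
  have e4 : (4 : K) ^ (p ^ r) = 4 := by
    have := hfix 4
    rwa [map_ofNat] at this
  have ex : x' ^ (p ^ r) = x' := hfix x
  have hstep : ∀ z : K, 27 * z ^ 2 * (1 - z) = 4 * x' →
      27 * (z ^ (p ^ r)) ^ 2 * (1 - z ^ (p ^ r)) = 4 * x' := by
    intro z hz
    have hmain : (27 * z ^ 2 * (1 - z)) ^ (p ^ r) = (4 * x') ^ (p ^ r) := by rw [hz]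
    rw [mul_pow, mul_pow, sub_pow_char_pow, one_pow, e27] at hmain
    rw [mul_pow, e4, ex] at hmain
    calc 27 * (z ^ (p ^ r)) ^ 2 * (1 - z ^ (p ^ r))
        = 27 * (z ^ 2) ^ (p ^ r) * (1 - z ^ (p ^ r)) := by ring
      _ = 4 * x' := hmain
  have hdesc : ∀ z : K, z ^ (p ^ r) = z → 27 * z ^ 2 * (1 - z) = 4 * x' → False := by
    intro z hzf hz
    obtain ⟨t, ht⟩ := fixed_in_base z (by rw [hF]; exact hzf)
    apply h t
    apply (algebraMap F K).injective
    rw [map_mul, map_mul, map_pow, map_sub, map_one, map_ofNat, map_mul, map_ofNat, ht]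
    exact hz
  -- b = a^q
  set b : K := a ^ (p ^ r) with hbdef
  have hb : 27 * b ^ 2 * (1 - b) = 4 * x' := hstep a ha
  have hab : a ≠ b := by
    intro he
    exact hdesc a he.symm ha
  -- quadratic factor
  have Qb : b ^ 2 + (a - 1) * b + (a ^ 2 - a) = 0 := by
    have hkey : (-27 : K) * (b - a) * (b ^ 2 + (a - 1) * b + (a ^ 2 - a)) = 0 := by
      linear_combination hb - ha
    rcases mul_eq_zero.mp hkey with h1 | h1
    · rcases mul_eq_zero.mp h1 with h2 | h2
      · exact absurd h2 (neg_ne_zero.mpr h27K)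
      · exact absurd (sub_eq_zero.mp h2).symm hab
    · exact h1
  have hQc : (1 - a - b) ^ 2 + (a - 1) * (1 - a - b) + (a ^ 2 - a) = 0 := by
    linear_combination Qb
  have hc : 27 * (1 - a - b) ^ 2 * (1 - (1 - a - b)) = 4 * x' := by
    linear_combination ha - 27 * ((1 - a - b) - a) * hQc
  -- b^q is a root, determine which one
  have hbq : 27 * (b ^ (p ^ r)) ^ 2 * (1 - b ^ (p ^ r)) = 4 * x' := hstep b hb
  have hroots : (b ^ (p ^ r) - a) * (b ^ (p ^ r) - b) * (b ^ (p ^ r) - (1 - a - b)) = 0 := by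
    have hff : (-27 : K) * ((b ^ (p ^ r) - a) * (b ^ (p ^ r) - b)
        * (b ^ (p ^ r) - (1 - a - b))) = 0 := by
      linear_combination hbq - ha + 27 * (b ^ (p ^ r) - a) * Qb
    rcases mul_eq_zero.mp hff with h1 | h1
    · exact absurd h1 (neg_ne_zero.mpr h27K)
    · exact h1
  have hbqc : b ^ (p ^ r) = 1 - a - b := by
    rcases mul_eq_zero.mp hroots with h1 | h1
    · rcases mul_eq_zero.mp h1 with h2 | h2
      · -- b^q = a : then 1 - a - b is fixed by Frobenius
        exfalso
        have h2' : b ^ (p ^ r) = a := sub_eq_zero.mp h2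
        have hcfix : (1 - a - b) ^ (p ^ r) = 1 - a - b := by
          rw [sub_pow_char_pow, sub_pow_char_pow, one_pow, h2', ← hbdef]
          ring
        exact hdesc _ hcfix hc
      · -- b^q = b : b is fixed
        exfalso
        exact hdesc b (sub_eq_zero.mp h2) hb
    · exact sub_eq_zero.mp h1
  -- delta is fixed by Frobenius
  set δ : K := (a - b) * (b - (1 - a - b)) * (a - (1 - a - b)) with hδdef
  have hcq : (1 - a - b) ^ (p ^ r) = a := by
    rw [sub_pow_char_pow, sub_pow_char_pow, one_pow, hbqc, ← hbdef]
    ring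
  have f1 : (a - b) ^ (p ^ r) = b - (1 - a - b) := by
    rw [sub_pow_char_pow, ← hbdef, hbqc]
  have f2 : (b - (1 - a - b)) ^ (p ^ r) = (1 - a - b) - a := by
    rw [sub_pow_char_pow, hbqc, hcq]
  have f3 : (a - (1 - a - b)) ^ (p ^ r) = b - a := by
    rw [sub_pow_char_pow, ← hbdef, hcq]
  have hδfix : δ ^ (p ^ r) = δ := by
    rw [hδdef, mul_pow, mul_pow, f1, f2, f3]
    ring
  obtain ⟨d, hd⟩ := fixed_in_base δ (by rw [hF]; exact hδfix)
  -- the discriminant identity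
  have hdisc : 27 * δ ^ 2 = 16 * x' * (1 - x') := by
    rw [hδdef]
    linear_combination (4 - 4 * x' - 27 * a ^ 2 + 27 * a ^ 3) * ha
      + (-27 * b + 135 * b ^ 2 - 216 * b ^ 3 + 108 * b ^ 4 + 81 * a - 243 * a * b
        + 54 * a * b ^ 2 + 216 * a * b ^ 3 + 135 * a ^ 2 + 783 * a ^ 2 * b
        - 405 * a ^ 2 * b ^ 2 - 945 * a ^ 3 - 513 * a ^ 3 * b + 837 * a ^ 4) * Qb
  -- descend to F
  have hdF : 27 * d ^ 2 = 16 * x * (1 - x) := by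
    apply (algebraMap F K).injective
    simp only [map_mul, map_pow, map_sub, map_one, map_ofNat]
    rw [hd]
    exact hdisc
  have h2F : (2 : F) ≠ 0 := by
    intro hh
    have h2' : ((2 : ℕ) : F) = 0 := by exact_mod_cast hh
    have := (CharP.cast_eq_zero_iff F p 2).mp h2'
    have := Nat.le_of_dvd (by norm_num) this
    omega
  have h4F : (4 : F) ≠ 0 := by
    have : (4 : F) = 2 * 2 := by norm_num
    rw [this]
    exact mul_ne_zero h2F h2F
  have h16F : (4 : F) * 4 ≠ 0 := mul_ne_zero h4F h4F
  refine ⟨9 * d / 4, ?_⟩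
  rw [div_mul_div_comm, eq_div_iff h16F]
  linear_combination -3 * hdF

theorem stmt_5 (p r : ℕ) (hp : p.Prime) (hp5 : 5 ≤ p) (hr : 1 ≤ r)
    (F : Type) [Field F] [Fintype F] [DecidableEq F]
    (hF : Fintype.card F = p ^ r)
    (x : F) (hx0 : x ≠ 0) (hx1 : x ≠ 1) :
    (∃! y : F, 27 * y ^ 2 * (1 - y) = 4 * x) ↔
      quadraticChar F (3 * x * (1 - x)) = -1 := by
  haveI hfp : Fact p.Prime := ⟨hp⟩
  haveI hcF : CharP F p := by
    have h0 : ((p : F)) ^ r = 0 := by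
      have hcc := FiniteField.cast_card_eq_zero F
      rw [hF] at hcc
      exact_mod_cast hcc
    have hp0 : (p : F) = 0 := pow_eq_zero_iff (n := r) (by omega) |>.mp h0
    have hrc : ringChar F = p := CharP.ringChar_of_prime_eq_zero hp hp0
    exact hrc ▸ ringChar.charP F
  have h2F : (2 : F) ≠ 0 := by
    intro hh
    have h2' : ((2 : ℕ) : F) = 0 := by exact_mod_cast hh
    have := (CharP.cast_eq_zero_iff F p 2).mp h2'
    have := Nat.le_of_dvd (by norm_num) this
    omega
  have h3F : (3 : F) ≠ 0 := by
    intro hh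
    have h3' : ((3 : ℕ) : F) = 0 := by exact_mod_cast hh
    have := (CharP.cast_eq_zero_iff F p 3).mp h3'
    have := Nat.le_of_dvd (by norm_num) this
    omega
  have h4F : (4 : F) ≠ 0 := by
    have : (4 : F) = 2 * 2 := by norm_num
    rw [this]; exact mul_ne_zero h2F h2F
  have h9F : (9 : F) ≠ 0 := by
    have : (9 : F) = 3 * 3 := by norm_num
    rw [this]; exact mul_ne_zero h3F h3F
  have h27F : (27 : F) ≠ 0 := by
    have : (27 : F) = 3 * 9 := by norm_num
    rw [this]; exact mul_ne_zero h3F h9F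
  -- facts about any root a : a ≠ 0 and 3a - 2 ≠ 0
  have hroot_facts : ∀ a : F, 27 * a ^ 2 * (1 - a) = 4 * x → a ≠ 0 ∧ 3 * a - 2 ≠ 0 := by
    intro a ha
    constructor
    · intro h0
      apply hx0
      have : (4 : F) * x = 0 := by rw [← ha, h0]; ring
      rcases mul_eq_zero.mp this with h' | h'
      · exact absurd h' h4F
      · exact h'
    · intro h0
      apply hx1
      have h4x : (4 : F) * x = 4 * 1 := by
        linear_combination -ha - (3 * a - 2) * (3 * a + 1) * h0
      exact mul_left_cancel₀ h4F h4x
  constructor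
  · rintro ⟨a, ha, huniq⟩
    rw [quadraticChar_neg_one_iff_not_isSquare]
    rintro ⟨s, hs⟩
    obtain ⟨ha0, ha32⟩ := hroot_facts a ha
    have hIDF : 48 * x * (1 - x) = (9 * a * (3 * a - 2)) ^ 2 * ((1 - a) * (3 * a + 1)) := by
      linear_combination (-12 + 12 * x + 81 * a ^ 2 - 81 * a ^ 3) * ha
    have hU : 9 * a * (3 * a - 2) ≠ 0 := mul_ne_zero (mul_ne_zero h9F ha0) ha32
    obtain ⟨t, ht⟩ : ∃ t : F, (1 - a) * (3 * a + 1) = t ^ 2 := by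
      refine ⟨4 * s / (9 * a * (3 * a - 2)), ?_⟩
      rw [div_pow, eq_div_iff (pow_ne_zero 2 hU)]
      linear_combination 16 * hs - hIDF
    obtain ⟨y₀, h2y⟩ : ∃ y₀ : F, 2 * y₀ = t - (a - 1) :=
      ⟨(t - (a - 1)) / 2, by field_simp⟩
    have h4Q : (4 : F) * (y₀ ^ 2 + (a - 1) * y₀ + (a ^ 2 - a)) = 0 := by
      linear_combination (2 * y₀ + (a - 1) + t) * h2y - ht
    have hQ : y₀ ^ 2 + (a - 1) * y₀ + (a ^ 2 - a) = 0 := by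
      rcases mul_eq_zero.mp h4Q with h' | h'
      · exact absurd h' h4F
      · exact h'
    have hy₀root : 27 * y₀ ^ 2 * (1 - y₀) = 4 * x := by
      linear_combination ha - 27 * (y₀ - a) * hQ
    have hya : y₀ = a := huniq y₀ hy₀root
    rw [hya] at hQ
    have hcontr : a * (3 * a - 2) = 0 := by linear_combination hQ
    rcases mul_eq_zero.mp hcontr with h' | h'
    · exact ha0 h'
    · exact ha32 h'
  · intro hφ
    have hns : ¬ IsSquare (3 * x * (1 - x)) :=
      quadraticChar_neg_one_iff_not_isSquare.mp hφ
    have hex : ∃ a : F, 27 * a ^ 2 * (1 - a) = 4 * x := by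
      by_contra hno
      push_neg at hno
      exact hns (no_root_isSquare p r hp hp5 hr F hF x hx0 hx1 hno)
    obtain ⟨a, ha⟩ := hex
    refine ⟨a, ha, ?_⟩
    intro y hy
    by_contra hne
    have hQ : y ^ 2 + (a - 1) * y + (a ^ 2 - a) = 0 := by
      have hprod27 : (-27 : F) * ((y - a) * (y ^ 2 + (a - 1) * y + (a ^ 2 - a))) = 0 := by
        linear_combination hy - ha
      have hprod := (mul_eq_zero.mp hprod27).resolve_left (neg_ne_zero.mpr h27F)
      exact (mul_eq_zero.mp hprod).resolve_left (sub_ne_zero.mpr hne)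
    have hsq : (2 * y + (a - 1)) ^ 2 = (1 - a) * (3 * a + 1) := by
      linear_combination 4 * hQ
    have hIDF : 48 * x * (1 - x) = (9 * a * (3 * a - 2)) ^ 2 * ((1 - a) * (3 * a + 1)) := by
      linear_combination (-12 + 12 * x + 81 * a ^ 2 - 81 * a ^ 3) * ha
    apply hns
    have h16F : (4 : F) * 4 ≠ 0 := mul_ne_zero h4F h4F
    refine ⟨9 * a * (3 * a - 2) * (2 * y + (a - 1)) / 4, ?_⟩
    rw [div_mul_div_comm, eq_div_iff h16F]
    linear_combination hIDF - (9 * a * (3 * a - 2)) ^ 2 * hsq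
end

section
/- Let p ≥ 5 be a prime and q = p^r with r ≥ 1, and let x ∈ F_q be nonzero. Then (1/(q(q−1))) · Σ_χ g(χ)·g(χ²)·g(χ̄³)·χ(−27/(4x)) = (φ(3x)/(q−1)) · Σ_χ (g(χ²)²·g(χ̄⁶)/(g(χ)·g(χ̄³)))·χ(−108/x), where both sums run over all multiplicative characters χ of F_q. -/
open Finset

section aux

variable {F : Type} [Field F] [Fintype F] [DecidableEq F]

private noncomputable def Phi (F : Type) [Field F] [Fintype F] [DecidableEq F] :
    MulChar F ℂ :=
  (quadraticChar F).ringHomComp (Int.castRingHom ℂ)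

private lemma Phi_apply (a : F) : Phi F a = ((quadraticChar F a : ℤ) : ℂ) := rfl

private lemma Phi_isQuadratic : (Phi F).IsQuadratic :=
  (quadraticChar_isQuadratic F).comp _

private lemma Phi_sq : (Phi F) ^ 2 = 1 := (Phi_isQuadratic).sq_eq_one

private lemma Phi_inv : (Phi F)⁻¹ = Phi F := (Phi_isQuadratic).inv

private lemma Phi_ne_one (hch2 : ringChar F ≠ 2) : Phi F ≠ 1 :=
  (MulChar.ringHomComp_ne_one_iff ((Int.castRingHom ℂ).injective_int)).mpr
    (quadraticChar_ne_one hch2)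

private lemma Phi_sq_arg (a : F) (ha : a ≠ 0) : Phi F (a ^ 2) = 1 := by
  rw [Phi_apply, quadraticChar_sq_one' ha, Int.cast_one]

private lemma gaussSum_one_eq (ψ : AddChar F ℂ) (hψ : ψ ≠ 1) :
    gaussSum (1 : MulChar F ℂ) ψ = -1 := by
  have h0 : ∑ t : F, ψ t = 0 := by
    refine AddChar.sum_eq_zero_iff_ne_zero.mpr ?_
    exact fun h => hψ h
  have h : ∀ t : F, (1 : MulChar F ℂ) t * ψ t = ψ t - (if t = (0 : F) then 1 else 0) := by
    intro t
    by_cases ht : t = 0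
    · simp [ht, MulChar.map_nonunit _ (not_isUnit_zero (M₀ := F))]
    · simp [MulChar.one_apply (isUnit_iff_ne_zero.mpr ht), ht]
  rw [gaussSum]
  simp_rw [h]
  rw [Finset.sum_sub_distrib, h0, Finset.sum_ite_eq' univ (0 : F) (fun _ => (1 : ℂ))]
  simp

private lemma gaussSum_ne_zero' (ψ : AddChar F ℂ) (hψ : ψ ≠ 1) (χ : MulChar F ℂ) :
    gaussSum χ ψ ≠ 0 := by
  have hprim : ψ.IsPrimitive := AddChar.IsPrimitive.of_ne_one hψ
  by_cases h : χ = 1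
  · rw [h, gaussSum_one_eq ψ hψ]; norm_num
  · exact gaussSum_ne_zero_of_nontrivial
      (by exact_mod_cast Nat.cast_ne_zero.mpr Fintype.card_ne_zero) h hprim

private lemma sq_eq_one_classify (hch2 : ringChar F ≠ 2) {χ : MulChar F ℂ}
    (hsq : χ ^ 2 = 1) (h1 : χ ≠ 1) : χ = Phi F := by
  obtain ⟨g, hg⟩ := IsCyclic.exists_generator (α := Fˣ)
  have hval : χ ↑g = 1 ∨ χ ↑g = -1 := by
    refine mul_self_eq_one_iff.mp ?_
    have h := congrArg (fun ξ : MulChar F ℂ => ξ (↑g : F)) hsq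
    simpa [MulChar.pow_apply_coe, sq, MulChar.one_apply_coe] using h
  rcases hval with hval | hval
  · exact absurd ((MulChar.eq_iff hg χ 1).mpr
      (by rw [hval, MulChar.one_apply_coe])) h1
  · refine (MulChar.eq_iff hg χ (Phi F)).mpr ?_
    rw [hval, Phi_apply]
    have hns : ¬ IsSquare ((g : Fˣ) : F) := by
      rintro ⟨y, hy⟩
      have hy0 : y ≠ 0 := by
        rintro rfl
        exact (g : Fˣ).ne_zero (by simpa using hy)
      have hgu : (g : Fˣ) = Units.mk0 y hy0 * Units.mk0 y hy0 := by
        ext; simpa using hy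
      have hodd : Fintype.card F % 2 = 1 := FiniteField.odd_card_of_char_ne_two hch2
      have hcard : Fintype.card Fˣ = Fintype.card F - 1 := Fintype.card_units (α := F)
      have hc2 : 2 ≤ Fintype.card F := Fintype.one_lt_card
      have heven : 2 * ((Fintype.card F - 1) / 2) = Fintype.card F - 1 := by omega
      have hpow : g ^ ((Fintype.card F - 1) / 2) = 1 := by
        rw [hgu, ← pow_two, ← pow_mul, heven, ← hcard, pow_card_eq_one]
      have hord : orderOf g = Fintype.card Fˣ := by
        rw [orderOf_eq_card_of_forall_mem_zpowers hg, Nat.card_eq_fintype_card]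
      have hdvd : orderOf g ∣ (Fintype.card F - 1) / 2 := orderOf_dvd_of_pow_eq_one hpow
      rw [hord, hcard] at hdvd
      have := Nat.le_of_dvd (by omega) hdvd
      omega
    rw [(quadraticChar_neg_one_iff_not_isSquare).mpr hns]
    norm_num

private lemma jacobi_dup (hch2 : ringChar F ≠ 2) (h2 : (2 : F) ≠ 0) {χ : MulChar F ℂ}
    (hχ : χ ≠ 1) :
    χ (4 : F) * jacobiSum χ χ = jacobiSum (Phi F) χ := by
  have step1 : χ (4 : F) * jacobiSum χ χ = ∑ t : F, χ (4 * (t * (1 - t))) := by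
    rw [jacobiSum, Finset.mul_sum]
    exact Finset.sum_congr rfl fun t _ => by rw [map_mul, map_mul]
  have step2 : ∑ t : F, χ (4 * (t * (1 - t))) = ∑ s : F, χ (1 - s ^ 2) := by
    refine (Fintype.sum_equiv ((Equiv.addLeft (1 : F)).trans
      (Equiv.mulLeft₀ (2⁻¹ : F) (inv_ne_zero h2))) _ _ fun s => ?_).symm
    congr 1
    simp only [Equiv.trans_apply, Equiv.coe_addLeft, Equiv.mulLeft₀_apply]
    field_simp
    ring
  have hcnt : ∀ u : F, (((univ.filter fun s : F => s ^ 2 = u).card : ℕ) : ℂ)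
      = Phi F u + 1 := by
    intro u
    have h := quadraticChar_card_sqrts hch2 u
    rw [Set.toFinset_setOf] at h
    rw [Phi_apply]
    exact_mod_cast congrArg (fun n : ℤ => (n : ℂ)) h
  have step3 : ∑ s : F, χ (1 - s ^ 2)
      = ∑ u : F, (Phi F u + 1) * χ (1 - u) := by
    rw [← Finset.sum_fiberwise' univ (fun s : F => s ^ 2) (fun u => χ (1 - u))]
    refine Finset.sum_congr rfl fun u _ => ?_
    rw [Finset.sum_const, nsmul_eq_mul, hcnt u]
  have step4 : ∑ u : F, (Phi F u + 1) * χ (1 - u) = jacobiSum (Phi F) χ := by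
    have hz : ∑ u : F, χ (1 - u) = 0 := by
      have h' : ∑ u : F, χ (1 - u) = ∑ v : F, χ v :=
        Fintype.sum_equiv (Equiv.subLeft (1 : F)) _ _ (fun u => rfl)
      rw [h']
      exact MulChar.sum_eq_zero_of_ne_one hχ
    simp_rw [add_mul, one_mul, Finset.sum_add_distrib, hz, add_zero]
    rfl
  rw [step1, step2, step3, step4]

/-- Hasse–Davenport duplication relation, for all characters. -/
private lemma hd (hch2 : ringChar F ≠ 2) (h2 : (2 : F) ≠ 0) {ψ : AddChar F ℂ}
    (hψ : ψ ≠ 1) (χ : MulChar F ℂ) :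
    gaussSum χ ψ * gaussSum (χ * Phi F) ψ * χ (4 : F)
      = gaussSum (χ ^ 2) ψ * gaussSum (Phi F) ψ := by
  have h4 : (4 : F) ≠ 0 := by
    have h44 : (4 : F) = 2 ^ 2 := by norm_num
    rw [h44]; exact pow_ne_zero _ h2
  by_cases hχ1 : χ = 1
  · rw [hχ1, one_mul, one_pow, MulChar.one_apply (isUnit_iff_ne_zero.mpr h4), mul_one,
      mul_comm]
  by_cases hχΦ : χ = Phi F
  · have h44 : (4 : F) = 2 ^ 2 := by norm_num
    rw [hχΦ, ← pow_two, Phi_sq, h44, Phi_sq_arg 2 h2, mul_one]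
    exact mul_comm _ _
  have hχ2 : χ ^ 2 ≠ 1 := fun h => hχΦ (sq_eq_one_classify hch2 h hχ1)
  have hχΦ1 : χ * Phi F ≠ 1 := by
    intro h
    exact hχΦ (by rw [← Phi_inv]; exact eq_inv_of_mul_eq_one_left (mul_comm χ (Phi F) ▸ h))
  have hχχ : χ * χ ≠ 1 := by rwa [← pow_two]
  have J1 := jacobiSum_mul_nontrivial hχχ ψ
  have J2 := jacobiSum_mul_nontrivial hχΦ1 ψ
  have Jd := jacobi_dup hch2 h2 hχ1
  rw [jacobiSum_comm (Phi F) χ] at Jd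
  have hGχ : gaussSum χ ψ ≠ 0 := gaussSum_ne_zero' ψ hψ χ
  have hJ : jacobiSum χ χ ≠ 0 := by
    intro h
    rw [h, mul_zero] at J1
    exact hGχ (mul_self_eq_zero.mp J1.symm)
  have hsq : χ * χ = χ ^ 2 := (pow_two χ).symm
  rw [hsq] at J1
  refine mul_left_cancel₀ (mul_ne_zero hGχ hJ) ?_
  linear_combination (gaussSum χ ψ ^ 2 * gaussSum (χ * Phi F) ψ) * Jd
    + gaussSum χ ψ ^ 2 * J2 - gaussSum χ ψ * gaussSum (Phi F) ψ * J1

end aux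

theorem stmt_6 (p r : ℕ) (hp : p.Prime) (hp5 : 5 ≤ p) (hr : 1 ≤ r)
    (F : Type) [Field F] [Fintype F] [DecidableEq F]
    (hF : Fintype.card F = p ^ r)
    [Fintype (MulChar F ℂ)]
    (ψ : AddChar F ℂ) (hψ : ψ ≠ 1)
    (x : F) (hx : x ≠ 0) :
    (1 / ((Fintype.card F : ℂ) * ((Fintype.card F : ℂ) - 1))) *
      ∑ χ : MulChar F ℂ,
        gaussSum χ ψ * gaussSum (χ ^ 2) ψ * gaussSum (χ⁻¹ ^ 3) ψ * χ (-27 / (4 * x))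
    = (((quadraticChar F (3 * x) : ℤ) : ℂ) / ((Fintype.card F : ℂ) - 1)) *
      ∑ χ : MulChar F ℂ,
        (gaussSum (χ ^ 2) ψ) ^ 2 * gaussSum (χ⁻¹ ^ 6) ψ /
          (gaussSum χ ψ * gaussSum (χ⁻¹ ^ 3) ψ) * χ (-108 / x) := by
  classical
  -- the characteristic is p
  haveI := ringChar.charP F
  obtain ⟨n, hpr, hcardeq⟩ := FiniteField.card F (ringChar F)
  have hrp : ringChar F = p := by
    have hdvd : ringChar F ∣ p ^ r := by
      rw [← hF, hcardeq]
      exact dvd_pow_self _ (by exact_mod_cast n.ne_zero)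
    exact (Nat.prime_dvd_prime_iff_eq hpr hp).mp (hpr.dvd_of_dvd_pow hdvd)
  have hcast : ∀ m : ℕ, ¬ p ∣ m → (m : F) ≠ 0 := by
    intro m hm h0
    exact hm (hrp ▸ (CharP.cast_eq_zero_iff F (ringChar F) m).mp h0)
  have hch2 : ringChar F ≠ 2 := by omega
  have h2 : (2 : F) ≠ 0 := by
    have := hcast 2 (fun h => by have := Nat.le_of_dvd (by norm_num) h; omega)
    exact_mod_cast this
  have h3 : (3 : F) ≠ 0 := by
    have := hcast 3 (fun h => by have := Nat.le_of_dvd (by norm_num) h; omega)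
    exact_mod_cast this
  have h4 : (4 : F) ≠ 0 := by
    have h44 : (4 : F) = 2 ^ 2 := by norm_num
    rw [h44]; exact pow_ne_zero _ h2
  have h18 : (18 : F) ≠ 0 := by
    have h18' : (18 : F) = 2 * 3 ^ 2 := by norm_num
    rw [h18']
    exact mul_ne_zero h2 (pow_ne_zero _ h3)
  have hprim : ψ.IsPrimitive := AddChar.IsPrimitive.of_ne_one hψ
  set q : ℂ := (Fintype.card F : ℂ) with hq
  have hq0 : q ≠ 0 := by
    simpa [hq] using (Nat.cast_ne_zero (R := ℂ)).mpr (Fintype.card_ne_zero (α := F))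
  have hq1 : q - 1 ≠ 0 := by
    have hc2 : 2 ≤ Fintype.card F := Fintype.one_lt_card
    have hne : (Fintype.card F : ℂ) ≠ 1 := by
      exact_mod_cast (by omega : Fintype.card F ≠ 1)
    exact sub_ne_zero.mpr hne
  have hG : ∀ χ : MulChar F ℂ, gaussSum χ ψ ≠ 0 := gaussSum_ne_zero' ψ hψ
  have hΦ1 : Phi F ≠ 1 := Phi_ne_one hch2
  have hGΦsq : gaussSum (Phi F) ψ ^ 2 = Phi F (-1) * q :=
    gaussSum_sq hΦ1 Phi_isQuadratic hprim
  -- reindex the right-hand sum by χ ↦ χ * Φ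
  have reix : ∑ χ : MulChar F ℂ,
        (gaussSum (χ ^ 2) ψ) ^ 2 * gaussSum (χ⁻¹ ^ 6) ψ /
          (gaussSum χ ψ * gaussSum (χ⁻¹ ^ 3) ψ) * χ (-108 / x)
      = ∑ χ : MulChar F ℂ,
        (gaussSum ((χ * Phi F) ^ 2) ψ) ^ 2 * gaussSum ((χ * Phi F)⁻¹ ^ 6) ψ /
          (gaussSum (χ * Phi F) ψ * gaussSum ((χ * Phi F)⁻¹ ^ 3) ψ) * (χ * Phi F) (-108 / x) :=
    (Fintype.sum_equiv (Equiv.mulRight (Phi F)) _ _ (fun χ => rfl)).symm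
  have hsc : ((quadraticChar F (3 * x) : ℤ) : ℂ) = Phi F (3 * x) := rfl
  rw [reix, hsc, Finset.mul_sum, Finset.mul_sum]
  refine Finset.sum_congr rfl fun χ _ => ?_
  -- character simplifications
  have hA : (χ * Phi F) ^ 2 = χ ^ 2 := by rw [mul_pow, Phi_sq, mul_one]
  have hInv : (χ * Phi F)⁻¹ = χ⁻¹ * Phi F := by rw [mul_inv, Phi_inv]
  have hΦ3 : (Phi F) ^ 3 = Phi F := by
    rw [pow_succ, Phi_sq, one_mul]
  have hΦ6 : (Phi F) ^ 6 = 1 := by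
    have : (6 : ℕ) = 2 * 3 := rfl
    rw [this, pow_mul, Phi_sq, one_pow]
  have hC : (χ * Phi F)⁻¹ ^ 3 = χ⁻¹ ^ 3 * Phi F := by
    rw [hInv, mul_pow, hΦ3]
  have hB : (χ * Phi F)⁻¹ ^ 6 = χ⁻¹ ^ 6 := by
    rw [hInv, mul_pow, hΦ6, mul_one]
  rw [hA, hB, hC]
  -- value simplifications
  have hmul : (χ * Phi F) (-108 / x) = χ (-108 / x) * Phi F (-108 / x) := by
    simp [MulChar.coeToFun_mul, Pi.mul_apply]
  rw [hmul]
  -- Hasse–Davenport inputs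
  have H1 := hd hch2 h2 hψ χ
  have H2 := hd hch2 h2 hψ (χ⁻¹ ^ 3)
  have hpow6 : (χ⁻¹ ^ 3) ^ 2 = χ⁻¹ ^ 6 := by rw [← pow_mul]
  rw [hpow6] at H2
  -- character-value arithmetic
  have hv : (χ⁻¹ ^ 3) (4 : F) = χ (((4 : F)⁻¹) ^ 3) := by
    rw [MulChar.pow_apply' _ (by norm_num), MulChar.inv_apply', map_pow]
  have H4 : χ (4 : F) * (χ⁻¹ ^ 3) (4 : F) * χ (-108 / x) = χ (-27 / (4 * x)) := by
    rw [hv, ← map_mul, ← map_mul]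
    congr 1
    field_simp
    ring
  have H5 : Phi F (3 * x) * Phi F (-108 / x) = Phi F (-1) := by
    rw [← map_mul]
    have harg : (3 * x) * (-108 / x) = (-1 : F) * 18 ^ 2 := by
      field_simp
      ring
    rw [harg, map_mul, Phi_sq_arg 18 h18, mul_one]
  -- final algebra
  have hE : gaussSum (χ * Phi F) ψ ≠ 0 := hG _
  have hFg : gaussSum (χ⁻¹ ^ 3 * Phi F) ψ ≠ 0 := hG _
  have key : gaussSum χ ψ * gaussSum (χ ^ 2) ψ * gaussSum (χ⁻¹ ^ 3) ψ * χ (-27 / (4 * x)) *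
        (gaussSum (χ * Phi F) ψ * gaussSum (χ⁻¹ ^ 3 * Phi F) ψ)
      = q * Phi F (3 * x) * (gaussSum (χ ^ 2) ψ ^ 2 * gaussSum (χ⁻¹ ^ 6) ψ *
        (χ (-108 / x) * Phi F (-108 / x))) := by
    linear_combination
      (gaussSum (χ ^ 2) ψ * χ (-108 / x) * gaussSum (χ⁻¹ ^ 3) ψ *
        gaussSum (χ⁻¹ ^ 3 * Phi F) ψ * ((χ⁻¹ ^ 3) (4 : F))) * H1
      + (gaussSum (χ ^ 2) ψ ^ 2 * χ (-108 / x) *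
        gaussSum (Phi F) ψ) * H2
      + (gaussSum (χ ^ 2) ψ ^ 2 * gaussSum (χ⁻¹ ^ 6) ψ * χ (-108 / x)) * hGΦsq
      - (q * gaussSum (χ ^ 2) ψ ^ 2 * gaussSum (χ⁻¹ ^ 6) ψ * χ (-108 / x)) * H5
      - (gaussSum χ ψ * gaussSum (χ ^ 2) ψ * gaussSum (χ⁻¹ ^ 3) ψ *
        gaussSum (χ * Phi F) ψ * gaussSum (χ⁻¹ ^ 3 * Phi F) ψ) * H4
  have hEG : gaussSum (χ * Phi F) ψ * gaussSum (χ⁻¹ ^ 3 * Phi F) ψ ≠ 0 :=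
    mul_ne_zero hE hFg
  calc 1 / (q * (q - 1)) *
        (gaussSum χ ψ * gaussSum (χ ^ 2) ψ * gaussSum (χ⁻¹ ^ 3) ψ * χ (-27 / (4 * x)))
      = gaussSum χ ψ * gaussSum (χ ^ 2) ψ * gaussSum (χ⁻¹ ^ 3) ψ * χ (-27 / (4 * x)) *
          (gaussSum (χ * Phi F) ψ * gaussSum (χ⁻¹ ^ 3 * Phi F) ψ) /
          (q * (q - 1) * (gaussSum (χ * Phi F) ψ * gaussSum (χ⁻¹ ^ 3 * Phi F) ψ)) := by
        rw [mul_div_mul_right _ _ hEG, one_div_mul_eq_div]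
    _ = q * Phi F (3 * x) * (gaussSum (χ ^ 2) ψ ^ 2 * gaussSum (χ⁻¹ ^ 6) ψ *
          (χ (-108 / x) * Phi F (-108 / x))) /
          (q * (q - 1) * (gaussSum (χ * Phi F) ψ * gaussSum (χ⁻¹ ^ 3 * Phi F) ψ)) := by
        rw [key]
    _ = Phi F (3 * x) / (q - 1) *
          (gaussSum (χ ^ 2) ψ ^ 2 * gaussSum (χ⁻¹ ^ 6) ψ /
            (gaussSum (χ * Phi F) ψ * gaussSum (χ⁻¹ ^ 3 * Phi F) ψ) *
            (χ (-108 / x) * Phi F (-108 / x))) := by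
        have e1 : gaussSum (χ ^ 2) ψ ^ 2 * gaussSum (χ⁻¹ ^ 6) ψ /
              (gaussSum (χ * Phi F) ψ * gaussSum (χ⁻¹ ^ 3 * Phi F) ψ) *
              (χ (-108 / x) * Phi F (-108 / x))
            = gaussSum (χ ^ 2) ψ ^ 2 * gaussSum (χ⁻¹ ^ 6) ψ *
              (χ (-108 / x) * Phi F (-108 / x)) /
              (gaussSum (χ * Phi F) ψ * gaussSum (χ⁻¹ ^ 3 * Phi F) ψ) :=
          div_mul_eq_mul_div _ _ _
        have e2 : Phi F (3 * x) / (q - 1) *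
              (gaussSum (χ ^ 2) ψ ^ 2 * gaussSum (χ⁻¹ ^ 6) ψ *
                (χ (-108 / x) * Phi F (-108 / x)) /
                (gaussSum (χ * Phi F) ψ * gaussSum (χ⁻¹ ^ 3 * Phi F) ψ))
            = Phi F (3 * x) * (gaussSum (χ ^ 2) ψ ^ 2 * gaussSum (χ⁻¹ ^ 6) ψ *
                (χ (-108 / x) * Phi F (-108 / x))) /
              ((q - 1) * (gaussSum (χ * Phi F) ψ * gaussSum (χ⁻¹ ^ 3 * Phi F) ψ)) :=
          div_mul_div_comm _ _ _ _
        rw [e1, e2, div_eq_div_iff (mul_ne_zero (mul_ne_zero hq0 hq1) hEG)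
          (mul_ne_zero hq1 hEG)]
        ring
end

section
/- Let p be an odd prime and q = p^r with r ≥ 1, and let λ ∈ F_q be nonzero. Then (1/(q−1)) · Σ_χ χ(λ⁻¹)·J(χ̄φ, χ)³ = Σ_{x,y ∈ F_q} φ(x·y·(x+1)·(y+1)·(x+λy)), where the first sum runs over all multiplicative characters χ of F_q and the second sum runs over all pairs (x,y) ∈ F_q × F_q. -/
open Finset

section aux

variable {F : Type} [Field F] [Fintype F] [DecidableEq F]

private lemma my_sum_mulChar [Fintype (MulChar F ℂ)] (a : F) :
    ∑ χ : MulChar F ℂ, χ a = if a = 1 then ((Fintype.card F : ℂ) - 1) else 0 := by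
  haveI : NeZero ((Monoid.exponent Fˣ : ℕ) : ℂ) :=
    ⟨by exact_mod_cast Monoid.exponent_ne_zero_of_finite⟩
  split_ifs with ha
  · subst ha
    simp only [MulChar.map_one, Finset.sum_const, Finset.card_univ, nsmul_eq_mul, mul_one]
    have h1 : Nat.card (MulChar F ℂ) = Nat.card Fˣ :=
      MulChar.card_eq_card_units_of_hasEnoughRootsOfUnity F ℂ
    rw [← Nat.card_eq_fintype_card, h1, Nat.card_eq_fintype_card, Fintype.card_units]
    have : 0 < Fintype.card F := Fintype.card_pos
    push_cast [Nat.cast_sub this]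
    ring
  · obtain ⟨χ, hχ⟩ := MulChar.exists_apply_ne_one_of_hasEnoughRootsOfUnity F ℂ ha
    refine eq_zero_of_mul_eq_self_left hχ ?_
    rw [Finset.mul_sum]
    simp only [← MulChar.mul_apply]
    exact Fintype.sum_bijective _ (Group.mulLeft_bijective χ) _ _ fun χ' ↦ rfl

private noncomputable def ψF (F : Type) [Field F] [Fintype F] [DecidableEq F] : MulChar F ℂ :=
  (quadraticChar F).ringHomComp (Int.castRingHom ℂ)

private lemma ψF_apply (a : F) : ψF F a = ((quadraticChar F a : ℤ) : ℂ) := by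
  simp [ψF, MulChar.ringHomComp_apply]

private lemma ψF_sq {a : F} (ha : a ≠ 0) : ψF F a * ψF F a = 1 := by
  rw [← map_mul]
  have h : quadraticChar F (a * a) = 1 := by
    rw [← sq]; exact quadraticChar_sq_one' ha
  rw [ψF_apply, h]; norm_num

private lemma ψF_ne_zero {a : F} (ha : a ≠ 0) : ψF F a ≠ 0 := by
  intro h
  have := ψF_sq ha
  rw [h, mul_zero] at this
  exact zero_ne_one this

private lemma ψF_inv (a : F) : ψF F a⁻¹ = ψF F a := by
  rcases eq_or_ne a 0 with rfl | ha
  · rw [inv_zero]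
  · have h : ψF F a⁻¹ * ψF F a = ψF F a * ψF F a := by
      rw [← map_mul, inv_mul_cancel₀ ha, map_one, ψF_sq ha]
    exact mul_right_cancel₀ (ψF_ne_zero ha) h

private lemma ψF_zero : ψF F 0 = 0 := MulChar.map_zero _

private lemma jac_eq (χ : MulChar F ℂ) :
    jacobiSum (χ⁻¹ * ψF F) χ = ∑ t : F, ψF F (1 + t) * χ t := by
  rw [jacobiSum]
  rw [← Finset.add_sum_erase _ (fun x => (χ⁻¹ * ψF F) x * χ (1 - x)) (mem_univ (0 : F)),
      ← Finset.add_sum_erase _ (fun t => ψF F (1 + t) * χ t) (mem_univ (-1 : F))]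
  have h0 : (χ⁻¹ * ψF F) 0 * χ (1 - 0) = 0 := by
    rw [MulChar.map_zero, zero_mul]
  have h1 : ψF F (1 + -1) * χ (-1) = 0 := by
    rw [show (1 : F) + -1 = 0 by ring, ψF_zero, zero_mul]
  rw [h0, h1, zero_add, zero_add]
  refine Finset.sum_nbij' (fun u => u⁻¹ - 1) (fun t => (1 + t)⁻¹) ?_ ?_ ?_ ?_ ?_
  · intro u hu
    rw [mem_erase] at hu ⊢
    refine ⟨?_, mem_univ _⟩
    intro h
    have : u⁻¹ = 0 := by linear_combination h
    exact hu.1 (by simpa using this)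
  · intro t ht
    rw [mem_erase] at ht ⊢
    refine ⟨?_, mem_univ _⟩
    have h1t : (1 : F) + t ≠ 0 := fun h => ht.1 (by linear_combination h)
    exact inv_ne_zero h1t
  · intro u hu
    rw [mem_erase] at hu
    show (1 + (u⁻¹ - 1))⁻¹ = u
    have : (1 : F) + (u⁻¹ - 1) = u⁻¹ := by ring
    rw [this, inv_inv]
  · intro t ht
    rw [mem_erase] at ht
    have h1t : (1 : F) + t ≠ 0 := fun h => ht.1 (by linear_combination h)
    show ((1 + t)⁻¹)⁻¹ - 1 = t
    rw [inv_inv]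
    ring
  · intro u hu
    rw [mem_erase] at hu
    have hu0 := hu.1
    show (χ⁻¹ * ψF F) u * χ (1 - u) = ψF F (1 + (u⁻¹ - 1)) * χ (u⁻¹ - 1)
    have e1 : (1 : F) + (u⁻¹ - 1) = u⁻¹ := by ring
    have e2 : u⁻¹ - 1 = u⁻¹ * (1 - u) := by field_simp
    rw [e1, e2, map_mul, MulChar.mul_apply, MulChar.inv_apply', ψF_inv]
    ring

private lemma stepL (lam : F) :
    ∑ b : F, ∑ a : F,
      ψF F a * ψF F b * ψF F (1 + a) * ψF F (1 + b) * ψF F (a * b + lam)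
    = ∑ b : F, ∑ a : F,
      ψF F a * ψF F b * ψF F (a + b) * ψF F (1 + b) * ψF F (a + lam) := by
  refine Finset.sum_congr rfl fun b _ => ?_
  rcases eq_or_ne b 0 with rfl | hb
  · simp [ψF_zero]
  · rw [← Equiv.sum_comp (Equiv.mulLeft₀ b⁻¹ (inv_ne_zero hb))
      (fun a => ψF F a * ψF F b * ψF F (1 + a) * ψF F (1 + b) * ψF F (a * b + lam))]
    refine Finset.sum_congr rfl fun a _ => ?_
    simp only [Equiv.mulLeft₀_apply]
    show ψF F (b⁻¹ * a) * ψF F b * ψF F (1 + b⁻¹ * a) * ψF F (1 + b) * ψF F (b⁻¹ * a * b + lam)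
      = ψF F a * ψF F b * ψF F (a + b) * ψF F (1 + b) * ψF F (a + lam)
    have e1 : (1 : F) + b⁻¹ * a = b⁻¹ * (a + b) := by field_simp; ring
    have e2 : b⁻¹ * a * b + lam = a + lam := by field_simp
    rw [e1, e2, map_mul, map_mul, ψF_inv]
    linear_combination (ψF F a * ψF F (a + b) * ψF F (1 + b) * ψF F (a + lam) * ψF F b) * ψF_sq hb

private lemma stepR1 (lam : F) :
    ∑ y : F, ∑ x : F,
      ψF F x * ψF F y * ψF F (x + 1) * ψF F (y + 1) * ψF F (x + lam * y)
    = ∑ y : F, ∑ x : F,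
      ψF F x * ψF F y * ψF F (x * y + 1) * ψF F (y + 1) * ψF F (x + lam) := by
  refine Finset.sum_congr rfl fun y _ => ?_
  rcases eq_or_ne y 0 with rfl | hy
  · simp [ψF_zero]
  · rw [← Equiv.sum_comp (Equiv.mulLeft₀ y hy)
      (fun x => ψF F x * ψF F y * ψF F (x + 1) * ψF F (y + 1) * ψF F (x + lam * y))]
    refine Finset.sum_congr rfl fun x _ => ?_
    simp only [Equiv.mulLeft₀_apply]
    show ψF F (y * x) * ψF F y * ψF F (y * x + 1) * ψF F (y + 1) * ψF F (y * x + lam * y)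
      = ψF F x * ψF F y * ψF F (x * y + 1) * ψF F (y + 1) * ψF F (x + lam)
    have e1 : y * x + lam * y = y * (x + lam) := by ring
    have e2 : y * x = x * y := by ring
    rw [e1, e2, map_mul, map_mul]
    linear_combination (ψF F x * ψF F (x * y + 1) * ψF F (y + 1) * ψF F (x + lam) * ψF F y) * ψF_sq hy

private lemma stepR2 (lam : F) :
    ∑ x : F, ∑ y : F,
      ψF F x * ψF F y * ψF F (x * y + 1) * ψF F (y + 1) * ψF F (x + lam)
    = ∑ x : F, ∑ y : F,
      ψF F x * ψF F y * ψF F (x + y) * ψF F (1 + y) * ψF F (x + lam) := by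
  refine Finset.sum_congr rfl fun x _ => ?_
  rcases eq_or_ne x 0 with rfl | hx
  · simp [ψF_zero]
  · rw [← Equiv.sum_comp (Equiv.mulLeft₀ x⁻¹ (inv_ne_zero hx))
      (fun y => ψF F x * ψF F y * ψF F (x * y + 1) * ψF F (y + 1) * ψF F (x + lam))]
    refine Finset.sum_congr rfl fun y _ => ?_
    simp only [Equiv.mulLeft₀_apply]
    show ψF F x * ψF F (x⁻¹ * y) * ψF F (x * (x⁻¹ * y) + 1) * ψF F (x⁻¹ * y + 1) * ψF F (x + lam)
      = ψF F x * ψF F y * ψF F (x + y) * ψF F (1 + y) * ψF F (x + lam)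
    have e1 : x * (x⁻¹ * y) + 1 = 1 + y := by field_simp; ring
    have e2 : x⁻¹ * y + 1 = x⁻¹ * (x + y) := by field_simp; ring
    rw [e1, e2, map_mul, map_mul, ψF_inv]
    linear_combination (ψF F y * ψF F (x + y) * ψF F (1 + y) * ψF F (x + lam) * ψF F x) * ψF_sq hx

end aux

theorem stmt_7 (p r : ℕ) (hp : p.Prime) (hp2 : p ≠ 2) (hr : 1 ≤ r)
    (F : Type) [Field F] [Fintype F] [DecidableEq F]
    (hF : Fintype.card F = p ^ r)
    [Fintype (MulChar F ℂ)]
    (lam : F) (hlam : lam ≠ 0) :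
    (1 / ((Fintype.card F : ℂ) - 1)) *
      ∑ χ : MulChar F ℂ,
        χ lam⁻¹ *
          (jacobiSum (χ⁻¹ * (quadraticChar F).ringHomComp (Int.castRingHom ℂ)) χ) ^ 3
    = ∑ x : F, ∑ y : F,
        ((quadraticChar F (x * y * (x + 1) * (y + 1) * (x + lam * y)) : ℤ) : ℂ) := by
  classical
  have hcard1 : ((Fintype.card F : ℂ) - 1) ≠ 0 := by
    have h2 : 2 ≤ Fintype.card F := Fintype.one_lt_card
    intro h
    have : (Fintype.card F : ℂ) = 1 := by linear_combination h
    have : (Fintype.card F : ℕ) = 1 := by exact_mod_cast this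
    omega
  -- Step 1: rewrite the Jacobi sums
  have h1 : ∑ χ : MulChar F ℂ,
      χ lam⁻¹ *
        (jacobiSum (χ⁻¹ * (quadraticChar F).ringHomComp (Int.castRingHom ℂ)) χ) ^ 3
      = ∑ χ : MulChar F ℂ, χ lam⁻¹ * (∑ t : F, ψF F (1 + t) * χ t) ^ 3 := by
    refine Finset.sum_congr rfl fun χ _ => ?_
    rw [show (quadraticChar F).ringHomComp (Int.castRingHom ℂ) = ψF F from rfl, jac_eq]
  -- Step 2: expand the cube
  have h2 : ∑ χ : MulChar F ℂ, χ lam⁻¹ * (∑ t : F, ψF F (1 + t) * χ t) ^ 3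
      = ∑ χ : MulChar F ℂ, ∑ a : F, ∑ b : F, ∑ c : F,
          (ψF F (1 + a) * ψF F (1 + b) * ψF F (1 + c)) * χ (lam⁻¹ * (a * (b * c))) := by
    refine Finset.sum_congr rfl fun χ _ => ?_
    simp only [pow_succ, pow_zero, one_mul, Finset.mul_sum, Finset.sum_mul]
    refine Finset.sum_congr rfl fun a _ => ?_
    refine Finset.sum_congr rfl fun b _ => ?_
    refine Finset.sum_congr rfl fun c _ => ?_
    simp only [map_mul]
    ring
  -- Step 3: swap sums and use orthogonality
  have h3 : ∑ χ : MulChar F ℂ, ∑ a : F, ∑ b : F, ∑ c : F,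
          (ψF F (1 + a) * ψF F (1 + b) * ψF F (1 + c)) * χ (lam⁻¹ * (a * (b * c)))
      = ∑ a : F, ∑ b : F, ∑ c : F, (ψF F (1 + a) * ψF F (1 + b) * ψF F (1 + c)) *
          (if lam⁻¹ * (a * (b * c)) = 1 then ((Fintype.card F : ℂ) - 1) else 0) := by
    rw [Finset.sum_comm]
    refine Finset.sum_congr rfl fun a _ => ?_
    rw [Finset.sum_comm]
    refine Finset.sum_congr rfl fun b _ => ?_
    rw [Finset.sum_comm]
    refine Finset.sum_congr rfl fun c _ => ?_
    rw [← Finset.mul_sum, my_sum_mulChar]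
  -- Step 4: eliminate c
  have h4 : ∑ a : F, ∑ b : F, ∑ c : F, (ψF F (1 + a) * ψF F (1 + b) * ψF F (1 + c)) *
          (if lam⁻¹ * (a * (b * c)) = 1 then ((Fintype.card F : ℂ) - 1) else 0)
      = ((Fintype.card F : ℂ) - 1) * ∑ a : F, ∑ b : F,
          ψF F a * ψF F b * ψF F (1 + a) * ψF F (1 + b) * ψF F (a * b + lam) := by
    rw [Finset.mul_sum]
    refine Finset.sum_congr rfl fun a _ => ?_
    rw [Finset.mul_sum]
    refine Finset.sum_congr rfl fun b _ => ?_
    by_cases hab : a * b = 0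
    · have hz : ∀ c : F, (ψF F (1 + a) * ψF F (1 + b) * ψF F (1 + c)) *
          (if lam⁻¹ * (a * (b * c)) = 1 then ((Fintype.card F : ℂ) - 1) else 0) = 0 := by
        intro c
        have hne : lam⁻¹ * (a * (b * c)) ≠ 1 := by
          rcases mul_eq_zero.mp hab with h | h <;>
            · rw [h]; simp
        rw [if_neg hne, mul_zero]
      rw [Finset.sum_eq_zero fun c _ => hz c]
      rcases mul_eq_zero.mp hab with h | h <;> rw [h, ψF_zero] <;> ring
    · have ha : a ≠ 0 := left_ne_zero_of_mul hab
      have hb : b ≠ 0 := right_ne_zero_of_mul hab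
      have hcond : ∀ c : F, (lam⁻¹ * (a * (b * c)) = 1) ↔ c = lam * (a * b)⁻¹ := by
        intro c
        rw [inv_mul_eq_one₀ hlam]
        constructor
        · intro h
          field_simp
          linear_combination -h
        · intro h
          rw [h]
          field_simp
      calc ∑ c : F, (ψF F (1 + a) * ψF F (1 + b) * ψF F (1 + c)) *
              (if lam⁻¹ * (a * (b * c)) = 1 then ((Fintype.card F : ℂ) - 1) else 0)
          = ∑ c : F, (if c = lam * (a * b)⁻¹ then
              (ψF F (1 + a) * ψF F (1 + b) * ψF F (1 + c)) * ((Fintype.card F : ℂ) - 1) else 0) := by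
            refine Finset.sum_congr rfl fun c _ => ?_
            simp only [hcond c, mul_ite, mul_zero]
        _ = (ψF F (1 + a) * ψF F (1 + b) * ψF F (1 + lam * (a * b)⁻¹)) *
              ((Fintype.card F : ℂ) - 1) := by
            rw [Finset.sum_ite_eq' univ (lam * (a * b)⁻¹)
              (fun c => (ψF F (1 + a) * ψF F (1 + b) * ψF F (1 + c)) * ((Fintype.card F : ℂ) - 1))]
            simp
        _ = ((Fintype.card F : ℂ) - 1) *
              (ψF F a * ψF F b * ψF F (1 + a) * ψF F (1 + b) * ψF F (a * b + lam)) := by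
            have harg : (1 : F) + lam * (a * b)⁻¹ = (a * b)⁻¹ * (a * b + lam) := by
              field_simp
            rw [harg, map_mul, ψF_inv, map_mul]
            ring
  -- assemble
  rw [h1, h2, h3, h4, ← mul_assoc, one_div, inv_mul_cancel₀ hcard1, one_mul]
  have hR : ∑ x : F, ∑ y : F,
        ((quadraticChar F (x * y * (x + 1) * (y + 1) * (x + lam * y)) : ℤ) : ℂ)
      = ∑ x : F, ∑ y : F,
        ψF F x * ψF F y * ψF F (x + 1) * ψF F (y + 1) * ψF F (x + lam * y) := by
    refine Finset.sum_congr rfl fun x _ => Finset.sum_congr rfl fun y _ => ?_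
    rw [← ψF_apply, map_mul, map_mul, map_mul, map_mul]
  rw [hR]
  calc ∑ a : F, ∑ b : F,
        ψF F a * ψF F b * ψF F (1 + a) * ψF F (1 + b) * ψF F (a * b + lam)
      = ∑ b : F, ∑ a : F,
        ψF F a * ψF F b * ψF F (1 + a) * ψF F (1 + b) * ψF F (a * b + lam) :=
      Finset.sum_comm
    _ = ∑ b : F, ∑ a : F,
        ψF F a * ψF F b * ψF F (a + b) * ψF F (1 + b) * ψF F (a + lam) := stepL lam
    _ = ∑ a : F, ∑ b : F,
        ψF F a * ψF F b * ψF F (a + b) * ψF F (1 + b) * ψF F (a + lam) :=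
      Finset.sum_comm
    _ = ∑ x : F, ∑ y : F,
        ψF F x * ψF F y * ψF F (x * y + 1) * ψF F (y + 1) * ψF F (x + lam) :=
      (stepR2 lam).symm
    _ = ∑ y : F, ∑ x : F,
        ψF F x * ψF F y * ψF F (x * y + 1) * ψF F (y + 1) * ψF F (x + lam) :=
      Finset.sum_comm
    _ = ∑ y : F, ∑ x : F,
        ψF F x * ψF F y * ψF F (x + 1) * ψF F (y + 1) * ψF F (x + lam * y) :=
      (stepR1 lam).symm
    _ = ∑ x : F, ∑ y : F,
        ψF F x * ψF F y * ψF F (x + 1) * ψF F (y + 1) * ψF F (x + lam * y) :=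
      Finset.sum_comm
end

section
/- Let p be an odd prime and q = p^r with r ≥ 1, and let λ ∈ F_q be nonzero. Then Σ_{x,y ∈ F_q} φ(x·y·(x+1)·(y+1)·(xy+λ)) = Σ_{x,y ∈ F_q} φ(x·y·(x+1)·(y+1)·(x+λy)), where both sums run over all pairs (x,y) ∈ F_q × F_q. -/
theorem stmt_8 (p r : ℕ) (hp : p.Prime) (hp2 : p ≠ 2) (hr : 1 ≤ r)
    (F : Type) [Field F] [Fintype F] [DecidableEq F]
    (hF : Fintype.card F = p ^ r)
    (lam : F) (hlam : lam ≠ 0) :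
    ∑ x : F, ∑ y : F, quadraticChar F (x * y * (x + 1) * (y + 1) * (x * y + lam))
    = ∑ x : F, ∑ y : F, quadraticChar F (x * y * (x + 1) * (y + 1) * (x + lam * y)) := by
  have hsq : ∀ (c t : F), c ≠ 0 →
      quadraticChar F (c ^ 2 * t) = quadraticChar F t := by
    intro c t hc
    rw [map_mul, map_pow, quadraticChar_sq_one hc, one_mul]
  have hA : ∀ x : F,
      ∑ y : F, quadraticChar F (x * y * (x + 1) * (y + 1) * (x * y + lam))
      = ∑ y : F, quadraticChar F (x * y * (x + 1) * (x + y) * (y + lam)) := by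
    intro x
    by_cases hx : x = 0
    · simp [hx]
    · refine Fintype.sum_equiv (Equiv.mulLeft₀ x hx) _ _ fun y => ?_
      simp only [Equiv.mulLeft₀_apply]
      have : x * (x * y) * (x + 1) * (x + x * y) * (x * y + lam)
          = x ^ 2 * (x * y * (x + 1) * (y + 1) * (x * y + lam)) := by ring
      rw [this, hsq _ _ hx]
  have hB : ∀ x : F,
      ∑ y : F, quadraticChar F (x * y * (x + 1) * (y + 1) * (x + lam * y))
      = ∑ y : F, quadraticChar F (x * y * (x + 1) * (x + y) * (y + lam)) := by
    intro x
    refine Fintype.sum_equiv (Equiv.mulLeft₀ lam hlam) _ _ fun y => ?_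
    simp only [Equiv.mulLeft₀_apply]
    have : x * (lam * y) * (x + 1) * (x + lam * y) * (lam * y + lam)
        = lam ^ 2 * (x * y * (x + 1) * (y + 1) * (x + lam * y)) := by ring
    rw [this, hsq _ _ hlam]
  calc ∑ x : F, ∑ y : F, quadraticChar F (x * y * (x + 1) * (y + 1) * (x * y + lam))
      = ∑ x : F, ∑ y : F, quadraticChar F (x * y * (x + 1) * (x + y) * (y + lam)) :=
        Finset.sum_congr rfl fun x _ => hA x
    _ = ∑ x : F, ∑ y : F, quadraticChar F (x * y * (x + 1) * (y + 1) * (x + lam * y)) :=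
        (Finset.sum_congr rfl fun x _ => hB x).symm
end
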